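/- arXiv:2201.05704 — 6 statements merged into one kernel-verified Lean document; each statement's English description precedes it below -/
import Mathlib

section
/- The variance of M is at most 2/3: ∫_{-2}^{2} (x - E(M))² M(x) dx ≤ 2/3, where E(M) = ∫_{-2}^{2} x M(x) dx. -/
/-!
Both `f` and `g = 1 - f` on `[-1, 1]` are probability densities, and `M` is the density of
`V - T` for independent `T ~ f`, `V ~ g`. Its moments are therefore polynomial in those of `f`
and `g` (Fubini and a translation), and the moments of `g` are those of the uniform weight on
`[-1, 1]` minus those of `f`. With `μ` the mean of `f`, the mean of `M` is `-2μ` and its variance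
is `Var T + Var V = (s - μ²) + (2/3 - s - μ²) = 2/3 - 2μ²`, where `s` is the second moment
of `f`.
-/

open Real MeasureTheory Set

noncomputable def intervalMoment (h : ℝ → ℝ) (a b : ℝ) (k : ℕ) : ℝ :=
  ∫ t in a..b, t ^ k * h t

noncomputable def crossCorrelation (f g : ℝ → ℝ) (a b x : ℝ) : ℝ :=
  ∫ t in a..b, f t * g (x + t)

lemma integral_quadratic_mul {h : ℝ → ℝ} {a b : ℝ} (hh : IntervalIntegrable h volume a b)
    (α β γ : ℝ) :
    ∫ t in a..b, (α + β * t + γ * t ^ 2) * h t =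
      α * intervalMoment h a b 0 + β * intervalMoment h a b 1 + γ * intervalMoment h a b 2 := by
  have hmoment (k : ℕ) : IntervalIntegrable (fun t => t ^ k * h t) volume a b :=
    hh.continuousOn_mul (by fun_prop)
  have hexpand : (fun t => (α + β * t + γ * t ^ 2) * h t) =
      fun t => α * (t ^ 0 * h t) + β * (t ^ 1 * h t) + γ * (t ^ 2 * h t) := by
    ext t; ring
  rw [hexpand, intervalIntegral.integral_add (((hmoment 0).const_mul α).add
      ((hmoment 1).const_mul β)) ((hmoment 2).const_mul γ),
    intervalIntegral.integral_add ((hmoment 0).const_mul α) ((hmoment 1).const_mul β)]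
  simp only [intervalIntegral.integral_const_mul, intervalMoment]

lemma intervalMoment_of_eqOn_one_sub {f g : ℝ → ℝ} {a b : ℝ}
    (hf : IntervalIntegrable f volume a b) (hg : EqOn g (fun t => 1 - f t) (uIcc a b)) (k : ℕ) :
    intervalMoment g a b k = (∫ t in a..b, t ^ k) - intervalMoment f a b k := by
  unfold intervalMoment
  rw [← intervalIntegral.integral_sub ((continuous_pow k).intervalIntegrable a b)
    (hf.continuousOn_mul (g := fun t => t ^ k) (by fun_prop))]
  refine intervalIntegral.integral_congr fun t ht => ?_
  simp only [hg ht]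
  ring

lemma intervalIntegral_eq_of_eq_zero_outside {h : ℝ → ℝ} {a b c d : ℝ}
    (hac : a ≤ c) (hdb : d ≤ b) (h0 : ∀ x ∉ Icc c d, h x = 0) :
    ∫ x in a..b, h x = ∫ x in c..d, h x := by
  have h_ae : ∀ᵐ x, h x = (Ioc c d).indicator h x := by
    filter_upwards [volume.ae_ne c] with x hxc
    by_cases hx : x ∈ Ioc c d
    · rw [indicator_of_mem hx]
    · rw [indicator_of_notMem hx, h0 x fun hx' => hx ⟨lt_of_le_of_ne hx'.1 hxc.symm, hx'.2⟩]
  have hsupp : Function.support ((Ioc c d).indicator h) ⊆ Ioc c d :=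
    support_indicator_subset
  rw [intervalIntegral.integral_congr_ae (h_ae.mono fun x hx _ => hx),
    intervalIntegral.integral_congr_ae (h_ae.mono fun x hx _ => hx),
    intervalIntegral.integral_eq_integral_of_support_subset hsupp,
    intervalIntegral.integral_eq_integral_of_support_subset
      (hsupp.trans (Ioc_subset_Ioc hac hdb))]

lemma measurable_ite_one_sub {f g : ℝ → ℝ} {a b : ℝ} (hf : Measurable f)
    (hg : ∀ x, g x = if x ∈ Icc a b then 1 - f x else 0) : Measurable g := by
  rw [funext hg]
  exact Measurable.ite measurableSet_Icc (measurable_const.sub hf) measurable_const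

lemma abs_ite_one_sub_le_one {f g : ℝ → ℝ} {a b : ℝ}
    (hf01 : ∀ x ∈ Icc a b, 0 ≤ f x ∧ f x ≤ 1)
    (hg : ∀ x, g x = if x ∈ Icc a b then 1 - f x else 0) (v : ℝ) : |g v| ≤ 1 := by
  rw [hg v]
  split_ifs with hv
  · obtain ⟨h0, h1⟩ := hf01 v hv
    exact abs_le.2 ⟨by linarith, by linarith⟩
  · simp

section CrossCorrelation

variable {f g p : ℝ → ℝ} {a b c d lo hi C : ℝ}

lemma integral_mul_crossCorrelation (hab : a ≤ b) (hcd : c ≤ d) (hlo : lo ≤ c - b)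
    (hhi : d - a ≤ hi) (hf : IntervalIntegrable f volume a b) (hg : Measurable g)
    (hgC : ∀ v, |g v| ≤ C) (hg0 : ∀ v ∉ Icc c d, g v = 0) (hp : Continuous p) :
    ∫ x in lo..hi, p x * crossCorrelation f g a b x =
      ∫ t in a..b, f t * ∫ v in c..d, p (v - t) * g v := by
  have hlohi : lo ≤ hi := by linarith
  obtain ⟨P, hP⟩ := (isCompact_Icc (a := lo) (b := hi)).exists_bound_of_continuousOn
    hp.continuousOn
  have hint : Integrable (Function.uncurry fun x t => p x * (f t * g (x + t)))
      ((volume.restrict (Ioc lo hi)).prod (volume.restrict (Ioc a b))) := by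
    refine ((integrable_const (P * C)).mul_prod hf.1.norm).mono' ?_ ?_
    · have hf' : AEStronglyMeasurable (fun z : ℝ × ℝ => f z.2)
          ((volume.restrict (Ioc lo hi)).prod (volume.restrict (Ioc a b))) :=
        hf.1.aestronglyMeasurable.comp_snd
      exact (hp.measurable.comp measurable_fst).aestronglyMeasurable.mul
        (hf'.mul (hg.comp measurable_add).aestronglyMeasurable)
    · rw [Measure.prod_restrict]
      refine (ae_restrict_iff' (measurableSet_Ioc.prod measurableSet_Ioc)).2 (ae_of_all _ ?_)
      rintro ⟨x, t⟩ ⟨hx, -⟩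
      have hpx : |p x| ≤ P := hP x (Ioc_subset_Icc_self hx)
      simp only [Function.uncurry_apply_pair, norm_mul, Real.norm_eq_abs]
      calc |p x| * (|f t| * |g (x + t)|) ≤ P * (|f t| * C) :=
            mul_le_mul hpx (mul_le_mul_of_nonneg_left (hgC _) (abs_nonneg _)) (by positivity)
              ((abs_nonneg _).trans hpx)
        _ = P * C * |f t| := by ring
  simp_rw [crossCorrelation, intervalIntegral.integral_of_le hlohi,
    intervalIntegral.integral_of_le hab, ← integral_const_mul]
  rw [integral_integral_swap hint]
  refine setIntegral_congr_fun measurableSet_Ioc fun t ht => ?_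
  have hshift : ∀ x, p x * (f t * g (x + t)) = f t * (p (x + t - t) * g (x + t)) := by
    intro x; rw [add_sub_cancel_right]; ring
  simp only [hshift]
  rw [← intervalIntegral.integral_of_le hlohi, intervalIntegral.integral_const_mul,
    intervalIntegral.integral_comp_add_right (fun v => p (v - t) * g v),
    intervalIntegral_eq_of_eq_zero_outside (c := c) (d := d) (by linarith [ht.2])
      (by linarith [ht.1]) fun v hv => by rw [hg0 v hv, mul_zero]]

lemma integral_quadratic_mul_crossCorrelation {α β γ : ℝ} (hab : a ≤ b) (hcd : c ≤ d)
    (hlo : lo ≤ c - b) (hhi : d - a ≤ hi) (hf : IntervalIntegrable f volume a b)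
    (hg : Measurable g) (hgC : ∀ v, |g v| ≤ C) (hg0 : ∀ v ∉ Icc c d, g v = 0)
    (hp : ∀ x, p x = α + β * x + γ * x ^ 2) :
    ∫ x in lo..hi, p x * crossCorrelation f g a b x =
      let F := intervalMoment f a b
      let G := intervalMoment g c d
      α * F 0 * G 0 + β * (F 0 * G 1 - F 1 * G 0) +
        γ * (F 0 * G 2 - 2 * F 1 * G 1 + F 2 * G 0) := by
  obtain rfl : p = fun x => α + β * x + γ * x ^ 2 := funext hp
  have hgi : IntervalIntegrable g volume c d :=
    (Measure.integrableOn_of_bounded (M := C) measure_Icc_lt_top.ne hg.aestronglyMeasurable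
      (ae_of_all _ hgC)).intervalIntegrable
  have hinner (t : ℝ) : ∫ v in c..d, (α + β * (v - t) + γ * (v - t) ^ 2) * g v =
      (α * intervalMoment g c d 0 + β * intervalMoment g c d 1 + γ * intervalMoment g c d 2) +
        (-(β * intervalMoment g c d 0) - 2 * γ * intervalMoment g c d 1) * t +
        γ * intervalMoment g c d 0 * t ^ 2 := by
    calc _ = ∫ v in c..d,
            ((α - β * t + γ * t ^ 2) + (β - 2 * γ * t) * v + γ * v ^ 2) * g v := by
          congr 1; ext v; ring
      _ = _ := by rw [integral_quadratic_mul hgi]; ring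
  rw [integral_mul_crossCorrelation hab hcd hlo hhi hf hg hgC hg0 (by fun_prop)]
  simp only [hinner, mul_comm (f _)]
  rw [integral_quadratic_mul hf]
  ring

end CrossCorrelation

theorem variance_of_M_le_general (f g M : ℝ → ℝ)
    (hf_meas : Measurable f)
    (hf01 : ∀ x ∈ Icc (-1:ℝ) 1, 0 ≤ f x ∧ f x ≤ 1)
    (hf_int : ∫ x in (-1:ℝ)..1, f x = 1)
    (hg : ∀ x, g x = if x ∈ Icc (-1:ℝ) 1 then 1 - f x else 0)
    (hM : ∀ x, M x = ∫ t in (-1:ℝ)..1, f t * g (x + t))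
    (EM : ℝ) (hEM : EM = ∫ x in (-2:ℝ)..2, x * M x) :
    ∫ x in (-2:ℝ)..2, (x - EM)^2 * M x ≤ 2/3 := by
  have hf : IntervalIntegrable f volume (-1) 1 :=
    intervalIntegral.intervalIntegrable_of_integral_ne_zero (by rw [hf_int]; exact one_ne_zero)
  have hg0 (v : ℝ) (hv : v ∉ Icc (-1:ℝ) 1) : g v = 0 := by rw [hg v, if_neg hv]
  have hG (k : ℕ) : intervalMoment g (-1) 1 k =
      (∫ t in (-1:ℝ)..1, t ^ k) - intervalMoment f (-1) 1 k :=
    intervalMoment_of_eqOn_one_sub hf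
      (fun v hv => by rw [hg v, if_pos (uIcc_of_le (by norm_num : (-1:ℝ) ≤ 1) ▸ hv)]) k
  have hF0 : intervalMoment f (-1) 1 0 = 1 := by simpa [intervalMoment] using hf_int
  have hM' : M = crossCorrelation f g (-1) 1 := funext hM
  have hmoments := fun (α β γ : ℝ) p hp =>
    integral_quadratic_mul_crossCorrelation (α := α) (β := β) (γ := γ) (p := p) (lo := -2)
      (hi := 2) (by norm_num) (by norm_num) (by norm_num) (by norm_num) hf
      (measurable_ite_one_sub hf_meas hg) (abs_ite_one_sub_le_one hf01 hg) hg0 hp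
  have hmean : EM = -2 * intervalMoment f (-1) 1 1 := by
    rw [hEM, hM', hmoments 0 1 0 _ fun x => by ring]
    simp only [hG, hF0, integral_pow]
    norm_num
    ring
  have hvariance :
      ∫ x in (-2:ℝ)..2, (x - EM)^2 * M x = 2/3 - 2 * intervalMoment f (-1) 1 1 ^ 2 := by
    rw [hM', hmoments (EM ^ 2) (-2 * EM) 1 _ fun x => by ring]
    simp only [hG, hF0, integral_pow, hmean]
    norm_num
    ring
  rw [hvariance]
  linarith [sq_nonneg (intervalMoment f (-1) 1 1)]

theorem variance_of_M_le (f g M : ℝ → ℝ)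
    (hf_meas : Measurable f)
    (hf01 : ∀ x ∈ Icc (-1:ℝ) 1, 0 ≤ f x ∧ f x ≤ 1)
    (hf_supp : ∀ x, x ∉ Icc (-1:ℝ) 1 → f x = 0)
    (hf_int : ∫ x in (-1:ℝ)..1, f x = 1)
    (hg : ∀ x, g x = if x ∈ Icc (-1:ℝ) 1 then 1 - f x else 0)
    (hM : ∀ x, M x = ∫ t in (-1:ℝ)..1, f t * g (x + t))
    (EM : ℝ) (hEM : EM = ∫ x in (-2:ℝ)..2, x * M x) :
    ∫ x in (-2:ℝ)..2, (x - EM)^2 * M x ≤ 2/3 :=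
  variance_of_M_le_general f g M hf_meas hf01 hf_int hg hM EM hEM
end

section
/- For every integer m ≥ 1: if m is even then a_m = (1/2) c_{m/2}; if m is odd then a_m = (2m sin(πm/2)/π) · Σ_{k=0}^{∞} ((-1)^k/(m² − 4k²)) c_k, where c_0 = 1/2 (and the series converges). -/
open Real MeasureTheory Set ComplexConjugate

/-!
Since `f` vanishes outside `[-1, 1]`, `a_m` is an integral over `[-1, 1]`. For even `m`,
`cos (π m x / 2) = cos (π (m / 2) x)` and there is nothing to prove. For odd `m`, on `[-1, 1]`
the function `cos (ω x)` with `ω = π m / 2` has the Fourier coefficients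
`(-1)ⁿ ω sin ω / (ω² - π² n²)`, which are real and even in `n`; Parseval's identity pairs them
with the Fourier coefficients `f̂ n` of `f`, and folding the sum over `ℤ` into a sum over `ℕ`
turns `f̂ k + f̂ (-k)` into `c_k` and `f̂ 0` into `∫ f / 2 = c_0`.
-/

theorem AddCircle.hasSum_conj_fourierCoeff_mul_fourierCoeff {T : ℝ} [Fact (0 < T)]
    {g h : AddCircle T → ℂ} (hg : MemLp g 2 haarAddCircle) (hh : MemLp h 2 haarAddCircle) :
    HasSum (fun n => conj (fourierCoeff g n) * fourierCoeff h n)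
      (∫ t, conj (g t) * h t ∂haarAddCircle) := by
  have key := fourierBasis.hasSum_inner_mul_inner (hg.toLp g) (hh.toLp h)
  rw [L2.inner_def] at key
  simp only [← inner_conj_symm (𝕜 := ℂ) (hg.toLp g), ← HilbertBasis.repr_apply_apply,
    fourierBasis_repr, fourierCoeff_congr_ae hg.coeFn_toLp,
    fourierCoeff_congr_ae hh.coeFn_toLp, RCLike.inner_apply] at key
  rwa [integral_congr_ae (g := fun t => conj (g t) * h t) (by
    filter_upwards [hg.coeFn_toLp, hh.coeFn_toLp] with t hgt hht
    rw [hgt, hht, mul_comm])] at key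

theorem hasSum_conj_fourierCoeffOn_mul_fourierCoeffOn {a b : ℝ} {g h : ℝ → ℂ} (hab : a < b)
    (hg : MemLp g 2 (volume.restrict (Ioc a b))) (hh : MemLp h 2 (volume.restrict (Ioc a b))) :
    HasSum (fun n => conj (fourierCoeffOn hab g n) * fourierCoeffOn hab h n)
      ((b - a)⁻¹ • ∫ x in a..b, conj (g x) * h x) := by
  have := Fact.mk (sub_pos.2 hab)
  rw [← add_sub_cancel a b] at hg hh
  have key := AddCircle.hasSum_conj_fourierCoeff_mul_fourierCoeff
    hg.memLp_liftIoc.haarAddCircle hh.memLp_liftIoc.haarAddCircle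
  have hint : ∫ t, conj (AddCircle.liftIoc (b - a) a g t) * AddCircle.liftIoc (b - a) a h t
      ∂AddCircle.haarAddCircle = fourierCoeffOn hab (fun x => conj (g x) * h x) 0 := by
    simp only [fourierCoeffOn, fourierCoeff, neg_zero, fourier_zero, one_smul]
    rfl
  rw [hint, fourierCoeffOn_eq_integral, one_div] at key
  simp only [neg_zero, fourier_zero, one_smul] at key
  exact key

theorem fourierCoeffOn_neg_one_one (g : ℝ → ℂ) (n : ℤ) :
    fourierCoeffOn (neg_one_lt_zero.trans one_pos) g n =
      (1 / 2 : ℂ) * ∫ x in (-1 : ℝ)..1, Complex.exp (-(π * n * x) * Complex.I) * g x := by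
  rw [fourierCoeffOn_eq_integral, Complex.real_smul]
  norm_num only [fourier_coe_apply, smul_eq_mul, Complex.ofReal_div, Complex.ofReal_one]
  congr 1
  refine intervalIntegral.integral_congr fun x _ => ?_
  congr 2
  push_cast
  ring

theorem integral_exp_mul_I_neg_one_one (θ : ℝ) :
    ∫ x in (-1 : ℝ)..1, Complex.exp (θ * x * Complex.I) = 2 * sinc θ := by
  rcases eq_or_ne θ 0 with rfl | hθ
  · norm_num
  have hc : (θ : ℂ) * Complex.I ≠ 0 := mul_ne_zero (by exact_mod_cast hθ) Complex.I_ne_zero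
  simp_rw [mul_right_comm _ _ Complex.I]
  rw [integral_exp_mul_complex hc, sinc_of_ne_zero hθ]
  have hneg : (θ : ℂ) * Complex.I * ((-1 : ℝ) : ℂ) = (-θ : ℝ) * Complex.I := by push_cast; ring
  rw [hneg, Complex.ofReal_one, mul_one, Complex.exp_mul_I, Complex.exp_mul_I]
  push_cast
  rw [Complex.cos_neg, Complex.sin_neg]
  field_simp
  ring

theorem fourierCoeffOn_cos {ω : ℝ} {n : ℤ} (h : ω ^ 2 ≠ (π * n) ^ 2) :
    fourierCoeffOn (neg_one_lt_zero.trans one_pos) (fun x => (cos (ω * x) : ℂ)) n =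
      (((-1) ^ n * ω * sin ω / (ω ^ 2 - (π * n) ^ 2) : ℝ) : ℂ) := by
  have hsub : ω - π * n ≠ 0 := fun h0 => h (by rw [sub_eq_zero.1 h0])
  have hadd : ω + π * n ≠ 0 := fun h0 => h (by rw [eq_neg_of_add_eq_zero_left h0]; ring)
  have hsinsub : sin (ω - π * n) = (-1) ^ n * sin ω := by rw [mul_comm, sin_sub_int_mul_pi]
  have hsinadd : sin (ω + π * n) = (-1) ^ n * sin ω := by rw [mul_comm, sin_add_int_mul_pi]
  have hexp : ∀ x : ℝ, Complex.exp (-(π * n * x) * Complex.I) * (cos (ω * x) : ℂ) =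
      (1 / 2 : ℂ) * (Complex.exp (↑(ω - π * n) * x * Complex.I) +
        Complex.exp (↑(-(ω + π * n)) * x * Complex.I)) := by
    intro x
    rw [Complex.ofReal_cos, Complex.cos, mul_div_assoc', mul_add, ← Complex.exp_add,
      ← Complex.exp_add]
    push_cast
    ring_nf
  rw [fourierCoeffOn_neg_one_one]
  simp_rw [hexp]
  rw [intervalIntegral.integral_const_mul, intervalIntegral.integral_add
    (Continuous.intervalIntegrable (by fun_prop) _ _)
    (Continuous.intervalIntegrable (by fun_prop) _ _), integral_exp_mul_I_neg_one_one,
    integral_exp_mul_I_neg_one_one, sinc_of_ne_zero hsub, sinc_of_ne_zero (neg_ne_zero.2 hadd),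
    sin_neg, hsinsub, hsinadd]
  have hsubC : (ω : ℂ) - π * n ≠ 0 := by exact_mod_cast hsub
  have haddC : (ω : ℂ) + π * n ≠ 0 := by exact_mod_cast hadd
  rw [show ω ^ 2 - (π * n) ^ 2 = (ω - π * n) * (ω + π * n) by ring]
  push_cast
  field_simp
  ring

theorem fourierCoeffOn_add_fourierCoeffOn_neg {g : ℝ → ℝ}
    (hg : IntervalIntegrable g volume (-1) 1) (n : ℤ) :
    fourierCoeffOn (neg_one_lt_zero.trans one_pos) (fun x => (g x : ℂ)) n +
        fourierCoeffOn (neg_one_lt_zero.trans one_pos) (fun x => (g x : ℂ)) (-n) =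
      ((∫ x in (-1 : ℝ)..1, cos (π * n * x) * g x : ℝ) : ℂ) := by
  have hexp : ∀ x : ℝ, Complex.exp (-(π * n * x) * Complex.I) * g x +
      Complex.exp (-(π * ↑(-n) * x) * Complex.I) * g x =
        2 * ((cos (π * n * x) * g x : ℝ) : ℂ) := by
    intro x
    rw [Complex.ofReal_mul, Complex.ofReal_cos, Complex.cos]
    push_cast
    ring_nf
  have hint : ∀ k : ℤ, IntervalIntegrable
      (fun x : ℝ => Complex.exp (-(π * k * x) * Complex.I) * g x) volume (-1) 1 :=
    fun k => IntervalIntegrable.continuousOn_mul ⟨hg.1.ofReal, hg.2.ofReal⟩ (by fun_prop)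
  rw [fourierCoeffOn_neg_one_one, fourierCoeffOn_neg_one_one, ← mul_add,
    ← intervalIntegral.integral_add (hint n) (hint (-n))]
  simp_rw [hexp]
  rw [intervalIntegral.integral_const_mul, intervalIntegral.integral_ofReal]
  ring

theorem HasSum.nat_ite_zero_add_neg {M : Type*} [AddCommGroup M] [TopologicalSpace M]
    [IsTopologicalAddGroup M] {f : ℤ → M} {a : M} (hf : HasSum f a) :
    HasSum (fun n : ℕ => if n = 0 then f 0 else f n + f (-n)) a := by
  have h := hf.nat_add_neg.sub (hasSum_ite_eq 0 (f 0))
  rw [add_sub_cancel_right] at h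
  refine h.congr_fun fun n => ?_
  rcases eq_or_ne n 0 with rfl | hn <;> simp [*]

/-- The zeroth coefficient is halved (the `a₀ / 2` convention): `c 0 = 1/2` is `∫ f / 2`. -/
noncomputable def cosCoeff (g : ℝ → ℝ) (k : ℕ) : ℝ :=
  if k = 0 then (1 / 2) * ∫ x in (-1 : ℝ)..1, g x else ∫ x in (-1 : ℝ)..1, cos (π * k * x) * g x

theorem ofReal_cosCoeff {g : ℝ → ℝ} (hg : IntervalIntegrable g volume (-1) 1) (k : ℕ) :
    (cosCoeff g k : ℂ) =
      if k = 0 then fourierCoeffOn (neg_one_lt_zero.trans one_pos) (fun x => (g x : ℂ)) 0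
      else fourierCoeffOn (neg_one_lt_zero.trans one_pos) (fun x => (g x : ℂ)) k +
        fourierCoeffOn (neg_one_lt_zero.trans one_pos) (fun x => (g x : ℂ)) (-k) := by
  have h := fourierCoeffOn_add_fourierCoeffOn_neg hg k
  rcases eq_or_ne k 0 with rfl | hk
  · simp only [Nat.cast_zero, Int.cast_zero, neg_zero, mul_zero, zero_mul, cos_zero,
      one_mul] at h
    simp only [cosCoeff, if_true]
    push_cast
    linear_combination (-1 / 2 : ℂ) * h
  · simpa [cosCoeff, hk] using h.symm

theorem hasSum_mul_cosCoeff {ω : ℝ} (hω : sin ω ≠ 0) {g : ℝ → ℝ}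
    (hg : MemLp g 2 (volume.restrict (Ioc (-1) 1))) :
    HasSum (fun k : ℕ => (-1) ^ k * ω * sin ω / (ω ^ 2 - (π * k) ^ 2) * cosCoeff g k)
      ((1 / 2) * ∫ x in (-1 : ℝ)..1, cos (ω * x) * g x) := by
  have hωn : ∀ n : ℤ, ω ^ 2 ≠ (π * n) ^ 2 := by
    intro n h
    rcases sq_eq_sq_iff_eq_or_eq_neg.1 h with h | h <;> apply hω <;>
      simp [h, mul_comm π, sin_int_mul_pi]
  have hgi : IntervalIntegrable g volume (-1) 1 :=
    (intervalIntegrable_iff_integrableOn_Ioc_of_le (by norm_num)).2 (hg.integrable one_le_two)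
  have hcos : MemLp (fun x => (cos (ω * x) : ℂ)) 2 (volume.restrict (Ioc (-1) 1)) :=
    MemLp.of_bound (by fun_prop) 1
      (ae_of_all _ fun x => by simpa [← Complex.ofReal_cos] using abs_cos_le_one (ω * x))
  have hgC : MemLp (fun x => (g x : ℂ)) 2 (volume.restrict (Ioc (-1) 1)) := hg.ofReal
  have hpar := (hasSum_conj_fourierCoeffOn_mul_fourierCoeffOn (neg_one_lt_zero.trans one_pos)
    hcos hgC).nat_ite_zero_add_neg
  simp only [fourierCoeffOn_cos (hωn _), Complex.conj_ofReal] at hpar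
  have hval : ((1 : ℝ) - -1)⁻¹ • ∫ x in (-1 : ℝ)..1, (cos (ω * x) : ℂ) * (g x : ℂ) =
      (((1 / 2) * ∫ x in (-1 : ℝ)..1, cos (ω * x) * g x : ℝ) : ℂ) := by
    simp_rw [Complex.real_smul, ← Complex.ofReal_mul, intervalIntegral.integral_ofReal]
    norm_num
  rw [hval] at hpar
  refine Complex.hasSum_ofReal.1 (hpar.congr_fun fun k => ?_)
  rw [Complex.ofReal_mul, ofReal_cosCoeff hgi]
  rcases eq_or_ne k 0 with rfl | hk
  · simp
  · simp [hk, ← inv_pow]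
    ring

theorem intervalIntegral.integral_eq_of_support_subset_Icc {E : Type*} [NormedAddCommGroup E]
    [NormedSpace ℝ E] {f : ℝ → E} {a b c d : ℝ} (hca : c < a) (hab : a ≤ b) (hbd : b ≤ d)
    (hf : Function.support f ⊆ Icc a b) :
    ∫ x in c..d, f x = ∫ x in a..b, f x := by
  rw [integral_of_le (hca.le.trans (hab.trans hbd)), integral_of_le hab,
    ← integral_Icc_eq_integral_Ioc (x := a) (y := b)]
  exact setIntegral_eq_of_subset_of_forall_sdiff_eq_zero measurableSet_Ioc
    (Icc_subset_Ioc hca hbd) fun x hx => Function.notMem_support.1 fun h => hx.2 (hf h)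

theorem sin_pi_mul_div_two_ne_zero {m : ℕ} (hm : Odd m) : sin (π * m / 2) ≠ 0 := by
  rw [Ne, sin_eq_zero_iff]
  rintro ⟨n, hn⟩
  obtain ⟨j, rfl⟩ := hm
  have h : ((2 * n : ℤ) : ℝ) = ((2 * j + 1 : ℕ) : ℤ) := by
    push_cast at hn ⊢
    nlinarith [pi_pos]
  have h' := Int.cast_injective h
  omega

theorem hasSum_mul_cosCoeff_of_odd {m : ℕ} (hm : Odd m) {g : ℝ → ℝ}
    (hg : MemLp g 2 (volume.restrict (Ioc (-1) 1))) :
    HasSum (fun k : ℕ => 2 * (m : ℝ) * sin (π * m / 2) / π *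
        ((-1 : ℝ) ^ k / ((m : ℝ) ^ 2 - 4 * (k : ℝ) ^ 2) * cosCoeff g k))
      ((1 / 2) * ∫ x in (-1 : ℝ)..1, cos (π * m / 2 * x) * g x) := by
  refine (hasSum_mul_cosCoeff (sin_pi_mul_div_two_ne_zero hm) hg).congr_fun fun k => ?_
  rw [show (π * m / 2) ^ 2 - (π * k) ^ 2 = π ^ 2 / 4 * ((m : ℝ) ^ 2 - 4 * k ^ 2) by ring]
  field_simp
  ring

theorem cosine_coeff_relation (f : ℝ → ℝ)
    (hf_meas : Measurable f)
    (hf01 : ∀ x ∈ Icc (-1:ℝ) 1, 0 ≤ f x ∧ f x ≤ 1)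
    (hf_supp : ∀ x, x ∉ Icc (-1:ℝ) 1 → f x = 0)
    (hf_int : ∫ x in (-1:ℝ)..1, f x = 1)
    (c : ℕ → ℝ) (a : ℕ → ℝ)
    (hc0 : c 0 = 1/2)
    (hc : ∀ k : ℕ, 1 ≤ k → c k = ∫ x in (-1:ℝ)..1, Real.cos (π * k * x) * f x)
    (ha : ∀ m : ℕ, 1 ≤ m → a m = (1/2) * ∫ x in (-2:ℝ)..2, Real.cos (π * m * x / 2) * f x)
    (m : ℕ) (hm : 1 ≤ m) :
    (Even m → a m = (1/2) * c (m / 2)) ∧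
    (Odd m →
      Summable (fun k : ℕ => ((-1 : ℝ)^k / ((m:ℝ)^2 - 4 * (k:ℝ)^2)) * c k) ∧
      a m = (2 * (m:ℝ) * Real.sin (π * m / 2) / π) *
        ∑' k : ℕ, ((-1 : ℝ)^k / ((m:ℝ)^2 - 4 * (k:ℝ)^2)) * c k) := by
  have ham : a m = (1 / 2) * ∫ x in (-1 : ℝ)..1, cos (π * m / 2 * x) * f x := by
    rw [ha m hm, intervalIntegral.integral_eq_of_support_subset_Icc (a := -1) (b := 1)
      (by norm_num) (by norm_num) (by norm_num)
      (Function.support_subset_iff'.2 fun x hx => by simp [hf_supp x hx])]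
    simp only [div_mul_eq_mul_div]
  refine ⟨fun ⟨j, hj⟩ => ?_, fun hodd => ?_⟩
  · subst hj
    rw [ham, show (j + j) / 2 = j by omega, hc j (by omega)]
    push_cast
    ring_nf
  have hf_L2 : MemLp f 2 (volume.restrict (Ioc (-1) 1)) :=
    MemLp.of_bound hf_meas.aestronglyMeasurable 1 <| ae_restrict_of_forall_mem measurableSet_Ioc
      fun x hx => (norm_of_nonneg (hf01 x (Ioc_subset_Icc_self hx)).1).trans_le
        (hf01 x (Ioc_subset_Icc_self hx)).2
  have hcf : c = cosCoeff f := funext fun k => by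
    rcases eq_or_ne k 0 with rfl | hk
    · simp [cosCoeff, hc0, hf_int]
    · simp [cosCoeff, hk, hc k (by omega)]
  have hsum := hasSum_mul_cosCoeff_of_odd hodd hf_L2
  rw [← hcf, ← ham] at hsum
  have hK : 2 * (m : ℝ) * sin (π * m / 2) / π ≠ 0 := by
    have := sin_pi_mul_div_two_ne_zero hodd
    have : (m : ℝ) ≠ 0 := by positivity
    positivity
  exact ⟨(summable_mul_left_iff hK).1 hsum.summable, by rw [← tsum_mul_left, hsum.tsum_eq]⟩
end

section
/- For every integer m ≥ 1, A_m = (4 sin(mπ/2)/(mπ)) · a_m − 2(a_m² + b_m²). -/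
/-!
Put `ω = π m / 2`. Since `f` and `M` vanish outside `[-2, 2]`, all three coefficients are
cosine or sine transforms over the whole line. `M` is the cross-correlation of `f` and `g`, so
Fubini and `cos (ω (x - t)) = cos ωx cos ωt + sin ωx sin ωt` give
`∫ cos (ωx) M x = Ĉg · Ĉf + Ŝg · Ŝf` for the cosine and sine transforms `Ĉ`, `Ŝ`.
Finally `g = 1_[-1,1] - f` yields `Ĉg = 2 sin ω / ω - Ĉf` and `Ŝg = -Ŝf`.
-/

open Real MeasureTheory Set

theorem integrable_mul_comp_add_prod {G : Type*} [MeasurableSpace G] [AddGroup G]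
    [MeasurableAdd₂ G] {μ ν : Measure G} [SFinite μ] [SFinite ν] [μ.IsAddRightInvariant]
    {f g : G → ℝ} (hf : Integrable f ν) (hg : Integrable g μ) :
    Integrable (fun p : G × G => f p.2 * g (p.1 + p.2)) (μ.prod ν) := by
  have h := hg.mul_prod hf
  simpa [Function.comp_def, mul_comm] using
    ((measurePreserving_add_prod μ ν).integrable_comp h.aestronglyMeasurable).mpr h

theorem integral_mul_indicator_one_sub {α : Type*} [MeasurableSpace α] {μ : Measure α}
    {φ f : α → ℝ} {s : Set α} (hs : MeasurableSet s) (hφ : IntegrableOn φ s μ)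
    (hφf : Integrable (fun x => φ x * f x) μ) :
    ∫ x, φ x * (s.indicator 1 x - f x) ∂μ = (∫ x in s, φ x ∂μ) - ∫ x, φ x * f x ∂μ := by
  have hind : ∀ x, φ x * s.indicator 1 x = s.indicator φ x := fun x => by
    by_cases hx : x ∈ s <;> simp [hx]
  simp_rw [mul_sub, hind]
  rw [integral_sub ((integrable_indicator_iff hs).2 hφ) hφf, integral_indicator hs]

theorem intervalIntegral_eq_integral_of_forall_notMem_Icc {E : Type*} [NormedAddCommGroup E]
    [NormedSpace ℝ E] {F : ℝ → E} {a b : ℝ} (hab : a ≤ b) (hF : ∀ x ∉ Icc a b, F x = 0) :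
    ∫ x in a..b, F x = ∫ x, F x := by
  rw [intervalIntegral.integral_of_le hab, ← integral_Icc_eq_integral_Ioc]
  exact setIntegral_eq_integral_of_forall_compl_eq_zero hF

theorem intervalIntegral_mul_eq_integral {φ F : ℝ → ℝ} {a b : ℝ} (hab : a ≤ b)
    (hF : ∀ x ∉ Icc a b, F x = 0) : ∫ x in a..b, φ x * F x = ∫ x, φ x * F x :=
  intervalIntegral_eq_integral_of_forall_notMem_Icc hab fun x hx => by rw [hF x hx, mul_zero]

theorem integrable_of_abs_le_of_forall_notMem_Icc {F : ℝ → ℝ} {a b C : ℝ}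
    (hF : AEStronglyMeasurable F) (hbound : ∀ x ∈ Icc a b, |F x| ≤ C)
    (hzero : ∀ x ∉ Icc a b, F x = 0) : Integrable F := by
  refine (integrableOn_iff_integrable_of_support_subset fun x hx => ?_).mp
    (Measure.integrableOn_of_bounded (by simp) hF
      (ae_restrict_of_forall_mem measurableSet_Icc hbound))
  by_contra h
  exact hx (hzero x h)

theorem integral_mul_comp_add_eq_zero_of_notMem_Icc {f g : ℝ → ℝ} {a b c d x : ℝ}
    (hf : ∀ t ∉ Icc a b, f t = 0) (hg : ∀ t ∉ Icc c d, g t = 0) (hx : x ∉ Icc (c - b) (d - a)) :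
    ∫ t, f t * g (x + t) = 0 := by
  have hzero : ∀ t, f t * g (x + t) = 0 := by
    intro t
    by_cases ht : t ∈ Icc a b
    · have hxt : x + t ∉ Icc c d := fun h =>
        hx ⟨by linarith [h.1, ht.2], by linarith [h.2, ht.1]⟩
      rw [hg _ hxt, mul_zero]
    · rw [hf t ht, zero_mul]
  simp [hzero]

section Trigonometric

variable {f g : ℝ → ℝ}

theorem MeasureTheory.Integrable.cos_mul (hf : Integrable f) (ω : ℝ) :
    Integrable fun x => cos (ω * x) * f x :=
  hf.bdd_mul (by fun_prop) (c := 1) (ae_of_all _ fun x => by simpa using abs_cos_le_one _)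

theorem MeasureTheory.Integrable.sin_mul (hf : Integrable f) (ω : ℝ) :
    Integrable fun x => sin (ω * x) * f x :=
  hf.bdd_mul (by fun_prop) (c := 1) (ae_of_all _ fun x => by simpa using abs_sin_le_one _)

theorem integral_cos_mul_comp_add (hg : Integrable g) (ω t : ℝ) :
    ∫ x, cos (ω * x) * g (x + t) =
      cos (ω * t) * (∫ x, cos (ω * x) * g x) + sin (ω * t) * ∫ x, sin (ω * x) * g x := by
  calc ∫ x, cos (ω * x) * g (x + t) = ∫ x, cos (ω * (x - t)) * g x := by
        simpa using integral_add_right_eq_self (fun x => cos (ω * (x - t)) * g x) t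
    _ = ∫ x, cos (ω * t) * (cos (ω * x) * g x) + sin (ω * t) * (sin (ω * x) * g x) := by
        congr 1; ext x; rw [mul_sub, cos_sub]; ring
    _ = _ := by
        rw [integral_add ((hg.cos_mul ω).const_mul _) ((hg.sin_mul ω).const_mul _),
          integral_const_mul, integral_const_mul]

theorem integral_cos_mul_correlation (hf : Integrable f) (hg : Integrable g) (ω : ℝ) :
    ∫ x, cos (ω * x) * ∫ t, f t * g (x + t) =
      (∫ x, cos (ω * x) * g x) * (∫ x, cos (ω * x) * f x) +
        (∫ x, sin (ω * x) * g x) * ∫ x, sin (ω * x) * f x := by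
  have hint : Integrable (Function.uncurry fun x t => cos (ω * x) * (f t * g (x + t)))
      (volume.prod volume) :=
    (integrable_mul_comp_add_prod hf hg).bdd_mul (c := 1)
      (Continuous.aestronglyMeasurable (by fun_prop))
      (ae_of_all _ fun p => by simpa using abs_cos_le_one _)
  calc ∫ x, cos (ω * x) * ∫ t, f t * g (x + t)
      = ∫ t, ∫ x, cos (ω * x) * (f t * g (x + t)) := by
        simp_rw [← integral_const_mul]; exact integral_integral_swap hint
    _ = ∫ t, (∫ x, cos (ω * x) * g x) * (cos (ω * t) * f t) +
          (∫ x, sin (ω * x) * g x) * (sin (ω * t) * f t) := by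
        congr 1; ext t
        simp_rw [mul_left_comm (cos (ω * _)) (f t), integral_const_mul,
          integral_cos_mul_comp_add hg]
        ring
    _ = _ := by
        rw [integral_add ((hf.cos_mul ω).const_mul _) ((hf.sin_mul ω).const_mul _),
          integral_const_mul, integral_const_mul]

theorem integral_Icc_cos_mul {ω : ℝ} (hω : ω ≠ 0) :
    ∫ x in Icc (-1) 1, cos (ω * x) = 2 * sin ω / ω := by
  rw [integral_Icc_eq_integral_Ioc, ← intervalIntegral.integral_of_le (by norm_num),
    intervalIntegral.integral_comp_mul_left (fun x => cos x) hω, integral_cos]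
  simp only [mul_neg, mul_one, sin_neg, smul_eq_mul]
  field_simp
  ring

theorem integral_Icc_sin_mul (ω : ℝ) : ∫ x in Icc (-1) 1, sin (ω * x) = 0 := by
  rcases eq_or_ne ω 0 with rfl | hω
  · simp
  rw [integral_Icc_eq_integral_Ioc, ← intervalIntegral.integral_of_le (by norm_num),
    intervalIntegral.integral_comp_mul_left (fun x => sin x) hω, integral_sin]
  simp

theorem integral_cos_mul_indicator_sub (hf : Integrable f) {ω : ℝ} (hω : ω ≠ 0) :
    ∫ x, cos (ω * x) * ((Icc (-1) 1).indicator 1 x - f x) =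
      2 * sin ω / ω - ∫ x, cos (ω * x) * f x := by
  rw [integral_mul_indicator_one_sub measurableSet_Icc
    (Continuous.integrableOn_Icc (by fun_prop)) (hf.cos_mul ω), integral_Icc_cos_mul hω]

theorem integral_sin_mul_indicator_sub (hf : Integrable f) (ω : ℝ) :
    ∫ x, sin (ω * x) * ((Icc (-1) 1).indicator 1 x - f x) = -∫ x, sin (ω * x) * f x := by
  rw [integral_mul_indicator_one_sub measurableSet_Icc
    (Continuous.integrableOn_Icc (by fun_prop)) (hf.sin_mul ω), integral_Icc_sin_mul, zero_sub]

end Trigonometric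

theorem cosine_coeff_of_M_general (f g M : ℝ → ℝ)
    (hf_meas : Measurable f)
    (hf01 : ∀ x ∈ Icc (-1:ℝ) 1, 0 ≤ f x ∧ f x ≤ 1)
    (hf_supp : ∀ x, x ∉ Icc (-1:ℝ) 1 → f x = 0)
    (hg : ∀ x, g x = if x ∈ Icc (-1:ℝ) 1 then 1 - f x else 0)
    (hM : ∀ x, M x = ∫ t in (-1:ℝ)..1, f t * g (x + t))
    (a b A : ℕ → ℝ)
    (ha : ∀ m : ℕ, 1 ≤ m → a m = (1/2) * ∫ x in (-2:ℝ)..2, Real.cos (π * m * x / 2) * f x)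
    (hb : ∀ m : ℕ, 1 ≤ m → b m = (1/2) * ∫ x in (-2:ℝ)..2, Real.sin (π * m * x / 2) * f x)
    (hA : ∀ m : ℕ, 1 ≤ m → A m = (1/2) * ∫ x in (-2:ℝ)..2, Real.cos (π * m * x / 2) * M x) :
    ∀ m : ℕ, 1 ≤ m →
      A m = (4 * Real.sin ((m:ℝ) * π / 2) / ((m:ℝ) * π)) * a m - 2 * ((a m)^2 + (b m)^2) := by
  intro m hm
  set ω : ℝ := π * m / 2
  have hω : ω ≠ 0 := by positivity
  have hf_int : Integrable f :=
    integrable_of_abs_le_of_forall_notMem_Icc hf_meas.aestronglyMeasurable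
      (fun x hx => abs_le.2 ⟨by linarith [hf01 x hx], (hf01 x hx).2⟩) hf_supp
  have hg_eq : ∀ x, g x = (Icc (-1) 1).indicator 1 x - f x := fun x => by
    by_cases hx : x ∈ Icc (-1:ℝ) 1 <;> simp [hg, hx, hf_supp]
  have hg_int : Integrable g := by
    rw [show g = (Icc (-1) 1).indicator 1 - f from funext hg_eq]
    exact ((integrable_indicator_iff measurableSet_Icc).2 (integrableOn_const (by simp))).sub hf_int
  have hM_eq : ∀ x, M x = ∫ t, f t * g (x + t) := fun x =>
    (hM x).trans (intervalIntegral_eq_integral_of_forall_notMem_Icc (by norm_num)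
      fun t ht => by rw [hf_supp t ht, zero_mul])
  have hg_supp : ∀ x ∉ Icc (-1:ℝ) 1, g x = 0 := fun x hx => by simp [hg, hx]
  have hM_supp : ∀ x ∉ Icc (-2:ℝ) 2, M x = 0 := fun x hx => by
    rw [hM_eq]
    exact integral_mul_comp_add_eq_zero_of_notMem_Icc hf_supp hg_supp
      (by norm_num at hx ⊢; exact hx)
  have hf_supp2 : ∀ x ∉ Icc (-2:ℝ) 2, f x = 0 := fun x hx =>
    hf_supp x fun h => hx (Icc_subset_Icc (by norm_num) (by norm_num) h)
  have harg : ∀ x, π * m * x / 2 = ω * x := fun x => by ring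
  rw [hA m hm, ha m hm, hb m hm]
  simp only [harg]
  rw [intervalIntegral_mul_eq_integral (by norm_num) hM_supp,
    intervalIntegral_mul_eq_integral (by norm_num) hf_supp2,
    intervalIntegral_mul_eq_integral (by norm_num) hf_supp2]
  simp only [hM_eq]
  rw [integral_cos_mul_correlation hf_int hg_int]
  simp only [hg_eq, integral_cos_mul_indicator_sub hf_int hω,
    integral_sin_mul_indicator_sub hf_int]
  rw [show (m:ℝ) * π / 2 = ω by ring, show (m:ℝ) * π = 2 * ω by ring]
  field_simp
  ring

theorem cosine_coeff_of_M (f g M : ℝ → ℝ)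
    (hf_meas : Measurable f)
    (hf01 : ∀ x ∈ Icc (-1:ℝ) 1, 0 ≤ f x ∧ f x ≤ 1)
    (hf_supp : ∀ x, x ∉ Icc (-1:ℝ) 1 → f x = 0)
    (hf_int : ∫ x in (-1:ℝ)..1, f x = 1)
    (hg : ∀ x, g x = if x ∈ Icc (-1:ℝ) 1 then 1 - f x else 0)
    (hM : ∀ x, M x = ∫ t in (-1:ℝ)..1, f t * g (x + t))
    (a b A : ℕ → ℝ)
    (ha : ∀ m : ℕ, 1 ≤ m → a m = (1/2) * ∫ x in (-2:ℝ)..2, Real.cos (π * m * x / 2) * f x)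
    (hb : ∀ m : ℕ, 1 ≤ m → b m = (1/2) * ∫ x in (-2:ℝ)..2, Real.sin (π * m * x / 2) * f x)
    (hA : ∀ m : ℕ, 1 ≤ m → A m = (1/2) * ∫ x in (-2:ℝ)..2, Real.cos (π * m * x / 2) * M x) :
    ∀ m : ℕ, 1 ≤ m →
      A m = (4 * Real.sin ((m:ℝ) * π / 2) / ((m:ℝ) * π)) * a m - 2 * ((a m)^2 + (b m)^2) :=
  cosine_coeff_of_M_general f g M hf_meas hf01 hf_supp hg hM a b A ha hb hA
end

section
/- Let T be a positive integer. For every integer m with 1 ≤ m < 2T, |(2m/π) Σ_{k=T+1}^{∞} ((-1)^k sin(πm/2)/(m² − 4k²)) c_k| ≤ (1/(4 − m²/T²)) · (2m/(π√(6T³))). -/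
open Real MeasureTheory Set

/-!
For `n = T + 1 + k > T` the `k`-th term is at most `|c n| / (4 n² - m²) ≤ (4 - m²/T²)⁻¹ |c n| / n²`,
so by Cauchy–Schwarz the tail is at most `(4 - m²/T²)⁻¹ (∑ c n²)^{1/2} (∑_{n > T} n⁻⁴)^{1/2}`.
The cosines `cos (π n x)`, `n ≥ 1`, are orthonormal on `[-1, 1]` and orthogonal to constants, so
Bessel's inequality applied to `f - 1/2` gives `∑ c n² ≤ ∫ (f - 1/2)² ≤ 1/2` because
`|f - 1/2| ≤ 1/2`; telescoping gives `∑_{n > T} n⁻⁴ ≤ 1 / (3 T³)`.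
-/

section Bessel

variable {α : Type*} [MeasurableSpace α] {μ : Measure α}

theorem MeasureTheory.MemLp.inner_toLp_toLp {f g : α → ℝ} (hf : MemLp f 2 μ)
    (hg : MemLp g 2 μ) : inner ℝ (hf.toLp f) (hg.toLp g) = ∫ x, f x * g x ∂μ := by
  rw [L2.inner_def]
  refine integral_congr_ae ?_
  filter_upwards [hf.coeFn_toLp, hg.coeFn_toLp] with x hfx hgx
  rw [hfx, hgx, Real.inner_apply]

theorem summable_and_tsum_sq_integral_mul_le {ι : Type*} [DecidableEq ι] {φ : ι → α → ℝ}
    (hφ : ∀ i, MemLp (φ i) 2 μ)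
    (horth : ∀ i j, ∫ x, φ i x * φ j x ∂μ = if i = j then 1 else 0)
    {g : α → ℝ} (hg : MemLp g 2 μ) :
    Summable (fun i ↦ (∫ x, φ i x * g x ∂μ) ^ 2) ∧
      ∑' i, (∫ x, φ i x * g x ∂μ) ^ 2 ≤ ∫ x, g x ^ 2 ∂μ := by
  have hon : Orthonormal ℝ fun i ↦ (hφ i).toLp (φ i) :=
    orthonormal_iff_ite.2 fun i j ↦ by rw [MemLp.inner_toLp_toLp, horth]
  have hcoeff : ∀ i,
      ‖inner ℝ ((hφ i).toLp (φ i)) (hg.toLp g)‖ ^ 2 = (∫ x, φ i x * g x ∂μ) ^ 2 :=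
    fun i ↦ by rw [Real.norm_eq_abs, sq_abs, MemLp.inner_toLp_toLp]
  have hnorm : ‖hg.toLp g‖ ^ 2 = ∫ x, g x ^ 2 ∂μ := by
    simp_rw [← real_inner_self_eq_norm_sq, MemLp.inner_toLp_toLp, sq]
  simp_rw [← hcoeff, ← hnorm]
  exact ⟨hon.inner_products_summable _, hon.tsum_inner_products_le _⟩

end Bessel

theorem Real.summable_and_tsum_mul_le_sqrt_mul_sqrt {ι : Type*} {f g : ι → ℝ}
    (hf : ∀ i, 0 ≤ f i) (hg : ∀ i, 0 ≤ g i) (hf2 : Summable fun i ↦ f i ^ 2)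
    (hg2 : Summable fun i ↦ g i ^ 2) :
    Summable (fun i ↦ f i * g i) ∧ ∑' i, f i * g i ≤ √(∑' i, f i ^ 2) * √(∑' i, g i ^ 2) := by
  simp_rw [← Real.rpow_two] at hf2 hg2
  have := Real.summable_and_inner_le_Lp_mul_Lq_tsum_of_nonneg .two_two hf hg hf2 hg2
  simpa only [Real.rpow_two, Real.sqrt_eq_rpow, one_div] using this

theorem integral_cos_pi_int_mul_eq_zero {n : ℤ} (hn : n ≠ 0) :
    ∫ x in (-1:ℝ)..1, cos (π * n * x) = 0 := by
  have hπn : π * n ≠ 0 := mul_ne_zero pi_ne_zero (Int.cast_ne_zero.2 hn)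
  rw [intervalIntegral.integral_comp_mul_left (fun x ↦ cos x) hπn, integral_cos, mul_one,
    mul_neg_one, sin_neg, mul_comm, sin_int_mul_pi]
  simp

theorem integral_cos_pi_nat_mul_mul_cos {a b : ℕ} (hb : b ≠ 0) :
    ∫ x in (-1:ℝ)..1, cos (π * a * x) * cos (π * b * x) = if a = b then 1 else 0 := by
  have hprod : ∀ x : ℝ, cos (π * a * x) * cos (π * b * x)
      = (cos (π * ((a - b : ℤ) : ℝ) * x) + cos (π * ((a + b : ℤ) : ℝ) * x)) / 2 := by
    intro x
    push_cast
    rw [show π * (a - b) * x = π * a * x - π * b * x by ring,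
      show π * (a + b) * x = π * a * x + π * b * x by ring, cos_sub, cos_add]
    ring
  have hcont : ∀ n : ℤ, Continuous fun x : ℝ ↦ cos (π * n * x) := by fun_prop
  simp_rw [hprod]
  rw [intervalIntegral.integral_div, intervalIntegral.integral_add
    ((hcont _).intervalIntegrable _ _) ((hcont _).intervalIntegrable _ _),
    integral_cos_pi_int_mul_eq_zero (n := a + b) (by omega)]
  split_ifs with hab
  · subst hab
    norm_num
  · rw [integral_cos_pi_int_mul_eq_zero (by omega)]
    norm_num

theorem one_div_add_one_pow_four_le {x : ℝ} (hx : 0 < x) :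
    1 / (x + 1) ^ 4 ≤ 1 / (3 * x ^ 3) - 1 / (3 * (x + 1) ^ 3) := by
  rw [div_sub_div _ _ (by positivity) (by positivity),
    div_le_div_iff₀ (by positivity) (by positivity)]
  nlinarith [pow_pos hx 2, pow_pos hx 3, pow_pos hx 4, pow_pos hx 5, pow_pos hx 6]

theorem summable_and_tsum_one_div_pow_four_le {T : ℝ} (hT : 0 < T) :
    Summable (fun k : ℕ ↦ 1 / (T + 1 + k) ^ 4) ∧
      ∑' k : ℕ, 1 / (T + 1 + k) ^ 4 ≤ 1 / (3 * T ^ 3) := by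
  have hnonneg : ∀ k : ℕ, 0 ≤ 1 / (T + 1 + k) ^ 4 := fun k ↦ by positivity
  have hpartial : ∀ N, ∑ k ∈ Finset.range N, 1 / (T + 1 + k) ^ 4 ≤ 1 / (3 * T ^ 3) := by
    intro N
    set g : ℕ → ℝ := fun k ↦ 1 / (3 * (T + k) ^ 3)
    calc ∑ k ∈ Finset.range N, 1 / (T + 1 + k) ^ 4
        ≤ ∑ k ∈ Finset.range N, (g k - g (k + 1)) := by
          gcongr with k
          simp only [g]
          push_cast
          rw [add_right_comm T 1, ← add_assoc]
          exact one_div_add_one_pow_four_le (by positivity)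
      _ = g 0 - g N := Finset.sum_range_sub' g N
      _ ≤ 1 / (3 * T ^ 3) := by
          simp only [g, Nat.cast_zero, add_zero, sub_le_self_iff]
          positivity
  exact ⟨summable_of_sum_range_le hnonneg hpartial, tsum_le_of_sum_range_le hnonneg hpartial⟩

theorem summable_and_tsum_sq_cosine_coeff_le {f : ℝ → ℝ} (hf_meas : Measurable f)
    (hf01 : ∀ x ∈ Icc (-1:ℝ) 1, 0 ≤ f x ∧ f x ≤ 1) :
    Summable (fun n : ℕ ↦ (∫ x in (-1:ℝ)..1, cos (π * (n + 1 : ℕ) * x) * f x) ^ 2) ∧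
      ∑' n : ℕ, (∫ x in (-1:ℝ)..1, cos (π * (n + 1 : ℕ) * x) * f x) ^ 2 ≤ 1 / 2 := by
  set μ := volume.restrict (Ioc (-1:ℝ) 1)
  have hIoc : uIoc (-1:ℝ) 1 = Ioc (-1) 1 := uIoc_of_le (by norm_num)
  have hcentered : ∀ x ∈ uIoc (-1:ℝ) 1, ‖f x - 1 / 2‖ ≤ 1 / 2 := fun x hx ↦ by
    obtain ⟨h0, h1⟩ := hf01 x (Ioc_subset_Icc_self (hIoc ▸ hx))
    rw [Real.norm_eq_abs, abs_le]
    constructor <;> linarith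
  have hcos : ∀ n : ℕ, Continuous fun x : ℝ ↦ cos (π * n * x) := by fun_prop
  have hφ : ∀ n : ℕ, MemLp (fun x ↦ cos (π * (n + 1 : ℕ) * x)) 2 μ := fun n ↦
    .of_bound (hcos _).aestronglyMeasurable 1 (.of_forall fun x ↦ by
      simpa only [Real.norm_eq_abs] using abs_cos_le_one _)
  have hg : MemLp (fun x ↦ f x - 1 / 2) 2 μ :=
    .of_bound (hf_meas.sub measurable_const).aestronglyMeasurable (1 / 2)
      (ae_restrict_of_forall_mem measurableSet_Ioc fun x hx ↦ hcentered x (hIoc ▸ hx))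
  have hf : MemLp f 2 μ := by
    convert hg.add (memLp_const (1 / 2 : ℝ)) using 1
    ext x
    simp
  have horth : ∀ i j : ℕ, ∫ x, cos (π * (i + 1 : ℕ) * x) * cos (π * (j + 1 : ℕ) * x) ∂μ
      = if i = j then 1 else 0 := fun i j ↦ by
    rw [← intervalIntegral.integral_of_le (by norm_num),
      integral_cos_pi_nat_mul_mul_cos (by omega)]
    simp
  have hcoeff : ∀ n : ℕ, ∫ x, cos (π * (n + 1 : ℕ) * x) * (f x - 1 / 2) ∂μ
      = ∫ x in (-1:ℝ)..1, cos (π * (n + 1 : ℕ) * x) * f x := fun n ↦ by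
    have hmean : ∫ x in (-1:ℝ)..1, cos (π * (n + 1 : ℕ) * x) = 0 := by
      exact_mod_cast integral_cos_pi_int_mul_eq_zero (n := (n + 1 : ℕ)) (by omega)
    have hint : Integrable (fun x ↦ cos (π * (n + 1 : ℕ) * x) * f x) μ :=
      (hφ n).integrable_mul hf
    simp_rw [mul_sub]
    rw [integral_sub hint (((hφ n).integrable one_le_two).mul_const _), integral_mul_const,
      ← intervalIntegral.integral_of_le (by norm_num),
      ← intervalIntegral.integral_of_le (by norm_num), hmean, zero_mul, sub_zero]
  have hsq : ∫ x, (f x - 1 / 2) ^ 2 ∂μ ≤ 1 / 2 := by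
    rw [← intervalIntegral.integral_of_le (by norm_num)]
    have hbound : ∀ x ∈ uIoc (-1:ℝ) 1, ‖(f x - 1 / 2) ^ 2‖ ≤ 1 / 4 := fun x hx ↦ by
      rw [norm_pow, show (1 / 4 : ℝ) = (1 / 2) ^ 2 by norm_num]
      exact pow_le_pow_left₀ (norm_nonneg _) (hcentered x hx) 2
    calc ∫ x in (-1:ℝ)..1, (f x - 1 / 2) ^ 2
        ≤ ‖∫ x in (-1:ℝ)..1, (f x - 1 / 2) ^ 2‖ := le_abs_self _
      _ ≤ 1 / 4 * |1 - (-1)| := intervalIntegral.norm_integral_le_of_norm_le_const hbound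
      _ = 1 / 2 := by norm_num
  have := summable_and_tsum_sq_integral_mul_le hφ horth hg
  simp_rw [hcoeff] at this
  exact ⟨this.1, this.2.trans hsq⟩

theorem summable_and_tsum_sq_cosine_coeff_tail_le {f : ℝ → ℝ} (hf_meas : Measurable f)
    (hf01 : ∀ x ∈ Icc (-1:ℝ) 1, 0 ≤ f x ∧ f x ≤ 1) {c : ℕ → ℝ}
    (hc : ∀ k : ℕ, 1 ≤ k → c k = ∫ x in (-1:ℝ)..1, cos (π * k * x) * f x) (T : ℕ) :
    Summable (fun k ↦ c (T + 1 + k) ^ 2) ∧ ∑' k, c (T + 1 + k) ^ 2 ≤ 1 / 2 := by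
  obtain ⟨hc_summ, hc_le⟩ := summable_and_tsum_sq_cosine_coeff_le hf_meas hf01
  simp_rw [← hc _ (Nat.le_add_left 1 _)] at hc_summ hc_le
  have htail : (fun k ↦ c (T + 1 + k) ^ 2) = (fun j ↦ c (j + 1) ^ 2) ∘ (T + ·) := by
    ext k
    simp only [Function.comp_apply, Nat.add_right_comm T 1 k]
  rw [htail]
  exact ⟨hc_summ.comp_injective (add_right_injective T),
    (tsum_comp_le_tsum_of_inj hc_summ (fun _ ↦ sq_nonneg _) (add_right_injective T)).trans hc_le⟩

theorem one_div_four_mul_sq_sub_sq_le {m T n : ℝ} (hT : 0 < T) (hmT : m ^ 2 < 4 * T ^ 2)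
    (hTn : T ≤ n) : 1 / (4 * n ^ 2 - m ^ 2) ≤ 1 / (4 - m ^ 2 / T ^ 2) * (1 / n ^ 2) := by
  have hratio : m ^ 2 / T ^ 2 < 4 := by rw [div_lt_iff₀ (by positivity)]; linarith
  have hsq : T ^ 2 ≤ n ^ 2 := pow_le_pow_left₀ hT.le hTn 2
  have hm_le : m ^ 2 ≤ m ^ 2 / T ^ 2 * n ^ 2 := by
    rw [div_mul_eq_mul_div, le_div_iff₀ (by positivity)]
    exact mul_le_mul_of_nonneg_left hsq (sq_nonneg m)
  rw [one_div_mul_one_div]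
  apply one_div_le_one_div_of_le (mul_pos (by linarith) (by nlinarith))
  nlinarith

theorem norm_neg_one_pow_mul_sin_div_mul_le {m T n : ℝ} (hT : 0 < T) (hmT : m ^ 2 < 4 * T ^ 2)
    (hTn : T ≤ n) (j : ℕ) (θ a : ℝ) :
    ‖(-1) ^ j * sin θ / (m ^ 2 - 4 * n ^ 2) * a‖
      ≤ 1 / (4 - m ^ 2 / T ^ 2) * (|a| * (1 / n ^ 2)) := by
  have hden : m ^ 2 - 4 * n ^ 2 < 0 := by nlinarith
  rw [Real.norm_eq_abs, abs_mul, abs_div, abs_mul, abs_pow, abs_neg, abs_one, one_pow, one_mul,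
    abs_of_neg hden, neg_sub]
  calc |sin θ| / (4 * n ^ 2 - m ^ 2) * |a| ≤ 1 / (4 * n ^ 2 - m ^ 2) * |a| := by
        gcongr
        · linarith
        · exact abs_sin_le_one θ
    _ ≤ 1 / (4 - m ^ 2 / T ^ 2) * (1 / n ^ 2) * |a| := by
        gcongr
        exact one_div_four_mul_sq_sub_sq_le hT hmT hTn
    _ = 1 / (4 - m ^ 2 / T ^ 2) * (|a| * (1 / n ^ 2)) := by ring

theorem summable_and_tsum_abs_mul_one_div_sq_le {T B : ℝ} (hT : 0 < T) {a : ℕ → ℝ}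
    (ha : Summable fun k ↦ a k ^ 2) (haB : ∑' k, a k ^ 2 ≤ B) :
    Summable (fun k : ℕ ↦ |a k| * (1 / (T + 1 + k) ^ 2)) ∧
      ∑' k : ℕ, |a k| * (1 / (T + 1 + k) ^ 2) ≤ √(B / (3 * T ^ 3)) := by
  obtain ⟨hq_summ, hq_le⟩ := summable_and_tsum_one_div_pow_four_le hT
  have hq_eq : (fun k : ℕ ↦ (1 / (T + 1 + k) ^ 2) ^ 2) = fun k : ℕ ↦ 1 / (T + 1 + k) ^ 4 := by
    ext k; rw [div_pow, one_pow, ← pow_mul]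
  obtain ⟨hsumm, hCS⟩ := Real.summable_and_tsum_mul_le_sqrt_mul_sqrt (fun k ↦ abs_nonneg (a k))
    (fun k ↦ by positivity : ∀ k : ℕ, 0 ≤ 1 / (T + 1 + k) ^ 2) (by simpa only [sq_abs] using ha)
    (hq_eq ▸ hq_summ)
  simp_rw [sq_abs, hq_eq] at hCS
  refine ⟨hsumm, hCS.trans ?_⟩
  rw [← mul_one_div B, sqrt_mul' _ (by positivity)]
  gcongr

theorem cosine_tail_bound_general (f : ℝ → ℝ)
    (hf_meas : Measurable f)
    (hf01 : ∀ x ∈ Icc (-1:ℝ) 1, 0 ≤ f x ∧ f x ≤ 1)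
    (c : ℕ → ℝ)
    (hc : ∀ k : ℕ, 1 ≤ k → c k = ∫ x in (-1:ℝ)..1, Real.cos (π * k * x) * f x)
    (T : ℕ) (hT : 0 < T) (m : ℕ) (hm2 : m < 2 * T) :
    |(2 * (m:ℝ) / π) * ∑' k : ℕ,
        ((-1 : ℝ)^(T + 1 + k) * Real.sin (π * m / 2) /
          ((m:ℝ)^2 - 4 * ((T + 1 + k : ℕ) : ℝ)^2)) * c (T + 1 + k)|
      ≤ (1 / (4 - (m:ℝ)^2 / (T:ℝ)^2)) * (2 * (m:ℝ) / (π * Real.sqrt (6 * (T:ℝ)^3))) := by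
  have hT' : (0:ℝ) < T := by exact_mod_cast hT
  have hmT : (m:ℝ) ^ 2 < 4 * (T:ℝ) ^ 2 := by
    have : (m:ℝ) < 2 * T := by exact_mod_cast hm2
    nlinarith [(Nat.cast_nonneg m : (0:ℝ) ≤ m)]
  obtain ⟨hc_summ, hc_le⟩ := summable_and_tsum_sq_cosine_coeff_tail_le hf_meas hf01 hc T
  obtain ⟨hprod_summ, hprod_le⟩ := summable_and_tsum_abs_mul_one_div_sq_le hT' hc_summ hc_le
  push_cast
  have hsum := tsum_of_norm_bounded (hprod_summ.mul_left _).hasSum fun k ↦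
    norm_neg_one_pow_mul_sin_div_mul_le hT' hmT (by linarith [k.cast_nonneg (α := ℝ)])
      (T + 1 + k) (π * m / 2) (c (T + 1 + k))
  rw [tsum_mul_left] at hsum
  have hD : 0 ≤ 1 / (4 - (m:ℝ) ^ 2 / (T:ℝ) ^ 2) :=
    one_div_nonneg.2 (by rw [sub_nonneg, div_le_iff₀ (by positivity)]; linarith)
  have hsqrt : √(1 / 2 / (3 * (T:ℝ) ^ 3)) = 1 / √(6 * (T:ℝ) ^ 3) := by
    rw [div_div, ← mul_assoc, sqrt_div' _ (by positivity), sqrt_one]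
    norm_num
  rw [abs_mul, abs_of_nonneg (by positivity), ← Real.norm_eq_abs]
  calc _ ≤ 2 * (m:ℝ) / π * (1 / (4 - (m:ℝ) ^ 2 / (T:ℝ) ^ 2) * (1 / √(6 * (T:ℝ) ^ 3))) := by
        gcongr
        rw [← hsqrt]
        exact hsum.trans (mul_le_mul_of_nonneg_left hprod_le hD)
    _ = _ := by ring

theorem cosine_tail_bound (f : ℝ → ℝ)
    (hf_meas : Measurable f)
    (hf01 : ∀ x ∈ Icc (-1:ℝ) 1, 0 ≤ f x ∧ f x ≤ 1)
    (hf_supp : ∀ x, x ∉ Icc (-1:ℝ) 1 → f x = 0)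
    (hf_int : ∫ x in (-1:ℝ)..1, f x = 1)
    (c : ℕ → ℝ)
    (hc : ∀ k : ℕ, 1 ≤ k → c k = ∫ x in (-1:ℝ)..1, Real.cos (π * k * x) * f x)
    (T : ℕ) (hT : 0 < T) (m : ℕ) (hm1 : 1 ≤ m) (hm2 : m < 2 * T) :
    |(2 * (m:ℝ) / π) * ∑' k : ℕ,
        ((-1 : ℝ)^(T + 1 + k) * Real.sin (π * m / 2) /
          ((m:ℝ)^2 - 4 * ((T + 1 + k : ℕ) : ℝ)^2)) * c (T + 1 + k)|
      ≤ (1 / (4 - (m:ℝ)^2 / (T:ℝ)^2)) * (2 * (m:ℝ) / (π * Real.sqrt (6 * (T:ℝ)^3))) :=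
  cosine_tail_bound_general f hf_meas hf01 c hc T hT m hm2
end

section
/- For all 1 ≤ m ≤ R: (L/2) Σ_{j=1}^{N} α_{j,m}⁻ (w_j + v_j) ≤ A_m ≤ (L/2) Σ_{j=1}^{N} α_{j,m}⁺ (w_j + v_j). -/
/-!
Since `cos (π m x / 2)` is even, `2 A_m = ∫₀² cos (π m x / 2) (M x + M (-x)) dx`. Cut `[0, 2]` into
the `N` cells `[(j-1)L, jL]`; on each cell the cosine lies between `α⁻_{j,m}` and `α⁺_{j,m}`, and
`M x + M (-x) ≥ 0` is a weight whose integral over the cell is `L (w_j + v_j)`.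
-/

open Real MeasureTheory Set

theorem IntervalIntegrable.comp_neg {E : Type*} [NormedAddCommGroup E] {F : ℝ → E} {a b : ℝ}
    (hF : IntervalIntegrable F volume (-a) (-b)) :
    IntervalIntegrable (fun x => F (-x)) volume a b := by
  simpa using (IntervalIntegrable.iff_comp_neg (f := F)).mp hF

theorem intervalIntegrable_of_abs_le {F : ℝ → ℝ} (hF : Measurable F) {C : ℝ}
    (hC : ∀ x, |F x| ≤ C) (a b : ℝ) : IntervalIntegrable F volume a b :=
  (intervalIntegrable_const (c := C)).mono_fun hF.aestronglyMeasurable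
    (ae_of_all _ fun x => by simpa using (hC x).trans (le_abs_self C))

namespace intervalIntegral

variable {E : Type*} [NormedAddCommGroup E] [NormedSpace ℝ E]

theorem integral_add_comp_neg {F : ℝ → E} {a b : ℝ} (hF : IntervalIntegrable F volume a b)
    (hF' : IntervalIntegrable F volume (-a) (-b)) :
    ∫ x in a..b, (F x + F (-x)) = (∫ x in a..b, F x) + ∫ x in -b..-a, F x := by
  rw [integral_add hF hF'.comp_neg, integral_comp_neg]

theorem integral_neg_self_eq_integral_add_comp_neg {F : ℝ → E} {a : ℝ}
    (hneg : IntervalIntegrable F volume (-a) 0) (hpos : IntervalIntegrable F volume 0 a) :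
    ∫ x in -a..a, F x = ∫ x in 0..a, (F x + F (-x)) := by
  rw [integral_add_comp_neg hpos (by simpa using hneg.symm), neg_zero,
    add_comm (∫ x in 0..a, F x), integral_add_adjacent_intervals hneg hpos]

theorem sum_integral_Icc_cells {F : ℝ → E} (hF : ∀ a b, IntervalIntegrable F volume a b)
    (L : ℝ) (N : ℕ) :
    ∑ j ∈ Finset.Icc 1 N, ∫ x in ((j:ℝ) - 1) * L..j * L, F x = ∫ x in 0..N * L, F x := by
  induction N with
  | zero => simp
  | succ N ih =>
    rw [Finset.sum_Icc_succ_top (by omega), ih, Nat.cast_succ, add_sub_cancel_right,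
      integral_add_adjacent_intervals (hF _ _) (hF _ _)]

theorem integral_mul_le_const_mul_integral {φ M : ℝ → ℝ} {a b α : ℝ} (hab : a ≤ b)
    (hφM : IntervalIntegrable (fun x => φ x * M x) volume a b)
    (hM : IntervalIntegrable M volume a b) (hM0 : ∀ x ∈ Icc a b, 0 ≤ M x)
    (hφ : ∀ x ∈ Icc a b, φ x ≤ α) :
    ∫ x in a..b, φ x * M x ≤ α * ∫ x in a..b, M x := by
  rw [← integral_const_mul]
  exact integral_mono_on hab hφM (hM.const_mul α) fun x hx =>
    mul_le_mul_of_nonneg_right (hφ x hx) (hM0 x hx)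

end intervalIntegral

section EvenWeight

variable {φ M : ℝ → ℝ} {L : ℝ} {α : ℕ → ℝ}

theorem integral_even_mul_le_sum_cells (hφ : Continuous φ) (hφ_even : ∀ x, φ (-x) = φ x)
    (hM : ∀ a b, IntervalIntegrable M volume a b) (hM0 : ∀ x, 0 ≤ M x) (hL : 0 ≤ L) (N : ℕ)
    (hα : ∀ j ∈ Finset.Icc 1 N, ∀ x ∈ Icc (((j:ℝ) - 1) * L) (j * L), φ x ≤ α j) :
    ∫ x in -(N * L)..N * L, φ x * M x ≤
      ∑ j ∈ Finset.Icc 1 N, α j * ∫ x in ((j:ℝ) - 1) * L..j * L, (M x + M (-x)) := by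
  have hS : ∀ a b, IntervalIntegrable (fun x => M x + M (-x)) volume a b :=
    fun a b => (hM a b).add (hM _ _).comp_neg
  have hφS : ∀ a b, IntervalIntegrable (fun x => φ x * (M x + M (-x))) volume a b :=
    fun a b => (hS a b).continuousOn_mul hφ.continuousOn
  have hφM : ∀ a b, IntervalIntegrable (fun x => φ x * M x) volume a b :=
    fun a b => (hM a b).continuousOn_mul hφ.continuousOn
  calc ∫ x in -(N * L)..N * L, φ x * M x
      = ∫ x in 0..N * L, φ x * (M x + M (-x)) := by
        rw [intervalIntegral.integral_neg_self_eq_integral_add_comp_neg (hφM _ _) (hφM _ _)]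
        simp only [hφ_even, mul_add]
    _ = ∑ j ∈ Finset.Icc 1 N, ∫ x in ((j:ℝ) - 1) * L..j * L, φ x * (M x + M (-x)) :=
        (intervalIntegral.sum_integral_Icc_cells hφS L N).symm
    _ ≤ _ := Finset.sum_le_sum fun j hj =>
        intervalIntegral.integral_mul_le_const_mul_integral
          (by nlinarith) (hφS _ _) (hS _ _) (fun x _ => add_nonneg (hM0 x) (hM0 (-x))) (hα j hj)

theorem sum_cells_le_integral_even_mul (hφ : Continuous φ) (hφ_even : ∀ x, φ (-x) = φ x)
    (hM : ∀ a b, IntervalIntegrable M volume a b) (hM0 : ∀ x, 0 ≤ M x) (hL : 0 ≤ L) (N : ℕ)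
    (hα : ∀ j ∈ Finset.Icc 1 N, ∀ x ∈ Icc (((j:ℝ) - 1) * L) (j * L), α j ≤ φ x) :
    ∑ j ∈ Finset.Icc 1 N, α j * ∫ x in ((j:ℝ) - 1) * L..j * L, (M x + M (-x)) ≤
      ∫ x in -(N * L)..N * L, φ x * M x := by
  have := integral_even_mul_le_sum_cells hφ.neg (by simpa using hφ_even) hM hM0 hL N
    (α := fun j => -α j) fun j hj x hx => neg_le_neg (hα j hj x hx)
  simpa only [Pi.neg_apply, neg_mul, intervalIntegral.integral_neg, Finset.sum_neg_distrib,
    neg_le_neg_iff] using this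

end EvenWeight

section Correlation

variable {f g : ℝ → ℝ}

theorem measurable_intervalIntegral_mul_comp_add (hf : Measurable f) (hg : Measurable g)
    (a b : ℝ) : Measurable fun x => ∫ t in a..b, f t * g (x + t) := by
  have h : StronglyMeasurable fun p : ℝ × ℝ => f p.2 * g (p.1 + p.2) :=
    ((hf.comp measurable_snd).mul (hg.comp (measurable_fst.add measurable_snd))).stronglyMeasurable
  exact (h.integral_prod_right' (ν := volume.restrict (Ioc a b))).measurable.sub
    (h.integral_prod_right' (ν := volume.restrict (Ioc b a))).measurable

theorem abs_intervalIntegral_mul_comp_add_le (hf : ∀ t, |f t| ≤ 1) (hg : ∀ t, |g t| ≤ 1)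
    (a b x : ℝ) : |∫ t in a..b, f t * g (x + t)| ≤ |b - a| := by
  simpa using intervalIntegral.norm_integral_le_of_norm_le_const (C := 1)
    (f := fun t => f t * g (x + t)) fun t _ => by
      simpa [abs_mul] using mul_le_one₀ (hf t) (abs_nonneg _) (hg (x + t))

theorem intervalIntegrable_intervalIntegral_mul_comp_add (hf_meas : Measurable f)
    (hg_meas : Measurable g) (hf : ∀ t, |f t| ≤ 1) (hg : ∀ t, |g t| ≤ 1) (a b c d : ℝ) :
    IntervalIntegrable (fun x => ∫ t in a..b, f t * g (x + t)) volume c d :=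
  intervalIntegrable_of_abs_le (measurable_intervalIntegral_mul_comp_add hf_meas hg_meas a b)
    (abs_intervalIntegral_mul_comp_add_le hf hg a b) c d

theorem intervalIntegral_mul_comp_add_nonneg {a b : ℝ} (hab : a ≤ b) (hf : ∀ t, 0 ≤ f t)
    (hg : ∀ t, 0 ≤ g t) (x : ℝ) : 0 ≤ ∫ t in a..b, f t * g (x + t) :=
  intervalIntegral.integral_nonneg hab fun t _ => mul_nonneg (hf t) (hg _)

end Correlation

theorem interval_cosine_estimate_general (f g M : ℝ → ℝ)
    (hf_meas : Measurable f)
    (hf01 : ∀ x ∈ Icc (-1:ℝ) 1, 0 ≤ f x ∧ f x ≤ 1)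
    (hf_supp : ∀ x, x ∉ Icc (-1:ℝ) 1 → f x = 0)
    (hg : ∀ x, g x = if x ∈ Icc (-1:ℝ) 1 then 1 - f x else 0)
    (hM : ∀ x, M x = ∫ t in (-1:ℝ)..1, f t * g (x + t))
    (N R : ℕ) (hN : 0 < N)
    (L : ℝ) (hL : L = 2 / (N : ℝ))
    (w v : ℕ → ℝ)
    (hw : ∀ j : ℕ, 1 ≤ j → j ≤ N →
      w j = (1/L) * ∫ x in (((j:ℝ) - 1) * L)..((j:ℝ) * L), M x)
    (hv : ∀ j : ℕ, 1 ≤ j → j ≤ N →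
      v j = (1/L) * ∫ x in (-(j:ℝ) * L)..(-((j:ℝ) - 1) * L), M x)
    (A : ℕ → ℝ)
    (hA : ∀ m : ℕ, 1 ≤ m → m ≤ R →
      A m = (1/2) * ∫ x in (-2:ℝ)..2, Real.cos (π * m * x / 2) * M x)
    (αp αm : ℕ → ℕ → ℝ)
    (hαp : ∀ j : ℕ, 1 ≤ j → j ≤ N → ∀ m : ℕ, 1 ≤ m → m ≤ R →
      ∀ x ∈ Icc (((j:ℝ) - 1) * L) ((j:ℝ) * L), Real.cos (π * m * x / 2) ≤ αp j m)
    (hαm : ∀ j : ℕ, 1 ≤ j → j ≤ N → ∀ m : ℕ, 1 ≤ m → m ≤ R →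
      ∀ x ∈ Icc (((j:ℝ) - 1) * L) ((j:ℝ) * L), αm j m ≤ Real.cos (π * m * x / 2)) :
    ∀ m : ℕ, 1 ≤ m → m ≤ R →
      (L/2) * ∑ j ∈ Finset.Icc 1 N, αm j m * (w j + v j) ≤ A m ∧
      A m ≤ (L/2) * ∑ j ∈ Finset.Icc 1 N, αp j m * (w j + v j) := by
  intro m hm1 hmR
  have hf_mem : ∀ t, f t ∈ Icc (0:ℝ) 1 := fun t =>
    (em (t ∈ Icc (-1:ℝ) 1)).elim (hf01 t) fun ht => by simp [hf_supp t ht]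
  have hg_mem : ∀ t, g t ∈ Icc (0:ℝ) 1 := fun t => by
    rw [hg]; split_ifs <;> simp [(hf_mem t).1, (hf_mem t).2]
  have hg_eq : g = (Icc (-1:ℝ) 1).indicator (1 - f) := funext fun x => by simp [hg, indicator_apply]
  have hg_meas : Measurable g := hg_eq ▸ (measurable_const.sub hf_meas).indicator measurableSet_Icc
  have habs : ∀ {y : ℝ}, y ∈ Icc (0:ℝ) 1 → |y| ≤ 1 := fun hy => abs_le.2 ⟨by linarith [hy.1], hy.2⟩
  have hM_int : ∀ a b, IntervalIntegrable M volume a b := funext hM ▸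
    intervalIntegrable_intervalIntegral_mul_comp_add hf_meas hg_meas (habs <| hf_mem ·)
      (habs <| hg_mem ·) _ _
  have hM0 : ∀ x, 0 ≤ M x := funext hM ▸
    intervalIntegral_mul_comp_add_nonneg (by norm_num) (hf_mem · |>.1) (hg_mem · |>.1)
  have hL0 : 0 < L := by rw [hL]; positivity
  have hsum : ∀ α : ℕ → ℝ, (L/2) * ∑ j ∈ Finset.Icc 1 N, α j * (w j + v j) =
      1/2 * ∑ j ∈ Finset.Icc 1 N, α j * ∫ x in ((j:ℝ) - 1) * L..j * L, (M x + M (-x)) := by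
    intro α
    rw [Finset.mul_sum, Finset.mul_sum]
    refine Finset.sum_congr rfl fun j hj => ?_
    obtain ⟨hj1, hjN⟩ := Finset.mem_Icc.mp hj
    rw [intervalIntegral.integral_add_comp_neg (hM_int _ _) (hM_int _ _), hw j hj1 hjN, hv j hj1 hjN, neg_mul, neg_mul]
    field_simp
  have hA' : A m = 1/2 * ∫ x in -(N * L)..N * L, Real.cos (π * m * x / 2) * M x := by
    rw [hA m hm1 hmR, show (N:ℝ) * L = 2 by rw [hL]; field_simp]
  have hφ : Continuous fun x => Real.cos (π * m * x / 2) := by fun_prop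
  have hφ_even : ∀ x, Real.cos (π * m * (-x) / 2) = Real.cos (π * m * x / 2) := fun x => by
    rw [← Real.cos_neg]; ring_nf
  rw [hA', hsum, hsum]
  constructor <;> gcongr
  · exact sum_cells_le_integral_even_mul hφ hφ_even hM_int hM0 hL0.le N fun j hj =>
      hαm j (Finset.mem_Icc.mp hj).1 (Finset.mem_Icc.mp hj).2 m hm1 hmR
  · exact integral_even_mul_le_sum_cells hφ hφ_even hM_int hM0 hL0.le N fun j hj =>
      hαp j (Finset.mem_Icc.mp hj).1 (Finset.mem_Icc.mp hj).2 m hm1 hmR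

theorem interval_cosine_estimate (f g M : ℝ → ℝ)
    (hf_meas : Measurable f)
    (hf01 : ∀ x ∈ Icc (-1:ℝ) 1, 0 ≤ f x ∧ f x ≤ 1)
    (hf_supp : ∀ x, x ∉ Icc (-1:ℝ) 1 → f x = 0)
    (hf_int : ∫ x in (-1:ℝ)..1, f x = 1)
    (hg : ∀ x, g x = if x ∈ Icc (-1:ℝ) 1 then 1 - f x else 0)
    (hM : ∀ x, M x = ∫ t in (-1:ℝ)..1, f t * g (x + t))
    (N R : ℕ) (hN : 0 < N) (hR : 0 < R)
    (L : ℝ) (hL : L = 2 / (N : ℝ))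
    (w v : ℕ → ℝ)
    (hw : ∀ j : ℕ, 1 ≤ j → j ≤ N →
      w j = (1/L) * ∫ x in (((j:ℝ) - 1) * L)..((j:ℝ) * L), M x)
    (hv : ∀ j : ℕ, 1 ≤ j → j ≤ N →
      v j = (1/L) * ∫ x in (-(j:ℝ) * L)..(-((j:ℝ) - 1) * L), M x)
    (A : ℕ → ℝ)
    (hA : ∀ m : ℕ, 1 ≤ m → m ≤ R →
      A m = (1/2) * ∫ x in (-2:ℝ)..2, Real.cos (π * m * x / 2) * M x)
    (αp αm : ℕ → ℕ → ℝ)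
    (hαp : ∀ j : ℕ, 1 ≤ j → j ≤ N → ∀ m : ℕ, 1 ≤ m → m ≤ R →
      ∀ x ∈ Icc (((j:ℝ) - 1) * L) ((j:ℝ) * L), Real.cos (π * m * x / 2) ≤ αp j m)
    (hαm : ∀ j : ℕ, 1 ≤ j → j ≤ N → ∀ m : ℕ, 1 ≤ m → m ≤ R →
      ∀ x ∈ Icc (((j:ℝ) - 1) * L) ((j:ℝ) * L), αm j m ≤ Real.cos (π * m * x / 2)) :
    ∀ m : ℕ, 1 ≤ m → m ≤ R →
      (L/2) * ∑ j ∈ Finset.Icc 1 N, αm j m * (w j + v j) ≤ A m ∧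
      A m ≤ (L/2) * ∑ j ∈ Finset.Icc 1 N, αp j m * (w j + v j) :=
  interval_cosine_estimate_general f g M hf_meas hf01 hf_supp hg hM N R hN L hL w v hw hv A hA αp αm
    hαp hαm
end

section
/- The second moment of M satisfies ∫_{-2}^{2} x² M(x) dx = 2/3 + (1/2) E(M)². -/
open Real MeasureTheory Set

lemma integrable_of_support {α : Type*} [MeasureSpace α] (K : Set α) (hK : MeasurableSet K)
    (hKfin : volume K ≠ ⊤) {C : ℝ} (h : α → ℝ) (hm : AEStronglyMeasurable h volume)
    (hs : ∀ x, x ∉ K → h x = 0) (hb : ∀ x, |h x| ≤ C) : Integrable h := by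
  have heq : h = K.indicator h := by
    ext x; by_cases hx : x ∈ K
    · simp [indicator_of_mem hx]
    · simp [indicator_of_notMem hx, hs x hx]
  rw [heq, integrable_indicator_iff hK]
  exact Measure.integrableOn_of_bounded hKfin hm
    (ae_of_all _ fun x => by rw [Real.norm_eq_abs]; exact hb x)

lemma interval_eq_full {c : ℝ} (hc : 0 ≤ c) (h : ℝ → ℝ) (hs : ∀ x, x ∉ Icc (-c) c → h x = 0) :
    ∫ x in (-c)..c, h x = ∫ x, h x := by
  rw [intervalIntegral.integral_of_le (by linarith), ← MeasureTheory.integral_Icc_eq_integral_Ioc]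
  exact setIntegral_eq_integral_of_forall_compl_eq_zero hs

lemma fubini_step (f g φ : ℝ → ℝ) (hfm : Measurable f) (hgm : Measurable g)
    (hφ : Measurable φ)
    (hfb : ∀ x, |f x| ≤ 1) (hgb : ∀ x, |g x| ≤ 1)
    (hφb : ∀ x ∈ Icc (-2:ℝ) 2, |φ x| ≤ 4)
    (hfs : ∀ x, x ∉ Icc (-1:ℝ) 1 → f x = 0)
    (hgs : ∀ x, x ∉ Icc (-1:ℝ) 1 → g x = 0) :
    (∫ x, φ x * ∫ t, f t * g (x + t)) = ∫ t, f t * ∫ s, (φ (s - t)) * g s := by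
  have hsupp : ∀ z : ℝ × ℝ, z ∉ Icc (-2:ℝ) 2 ×ˢ Icc (-1:ℝ) 1 →
      φ z.1 * (f z.2 * g (z.1 + z.2)) = 0 := by
    rintro ⟨x, t⟩ hz
    by_cases ht : t ∈ Icc (-1:ℝ) 1
    · have hx : x ∉ Icc (-2:ℝ) 2 := fun hx => hz (mk_mem_prod hx ht)
      have : g (x + t) = 0 := by
        apply hgs
        simp only [mem_Icc, not_and, not_le] at hx ⊢
        obtain ⟨c, d⟩ := ht
        intro h1
        by_cases h2 : -2 ≤ x
        · linarith [hx h2]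
        · push_neg at h2; linarith
      simp [this]
    · simp [hfs t ht]
  have hmeas : Measurable (fun z : ℝ × ℝ => φ z.1 * (f z.2 * g (z.1 + z.2))) := by fun_prop
  have hH : Integrable (fun z : ℝ × ℝ => φ z.1 * (f z.2 * g (z.1 + z.2))) := by
    apply integrable_of_support (Icc (-2:ℝ) 2 ×ˢ Icc (-1:ℝ) 1)
      (measurableSet_Icc.prod measurableSet_Icc)
      ((isCompact_Icc.prod isCompact_Icc).measure_lt_top.ne) (C := 4) _
      hmeas.aestronglyMeasurable hsupp
    intro z
    by_cases hz : z ∈ Icc (-2:ℝ) 2 ×ˢ Icc (-1:ℝ) 1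
    · have h1 := hφb z.1 hz.1
      have h2 := hfb z.2
      have h3 := hgb (z.1 + z.2)
      calc |φ z.1 * (f z.2 * g (z.1 + z.2))| = |φ z.1| * (|f z.2| * |g (z.1 + z.2)|) := by
            rw [abs_mul, abs_mul]
        _ ≤ 4 * (1 * 1) := by
            apply mul_le_mul h1 _ (by positivity) (by norm_num)
            exact mul_le_mul h2 h3 (abs_nonneg _) (by norm_num)
        _ = 4 := by norm_num
    · rw [hsupp z hz]; norm_num
  calc (∫ x, φ x * ∫ t, f t * g (x + t))
      = ∫ x, ∫ t, φ x * (f t * g (x + t)) := by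
        simp_rw [MeasureTheory.integral_const_mul]
    _ = ∫ t, ∫ x, φ x * (f t * g (x + t)) :=
        integral_integral_swap (by exact (Measure.volume_eq_prod ℝ ℝ) ▸ hH)
    _ = ∫ t, f t * ∫ x, φ x * g (x + t) := by
        refine integral_congr_ae (ae_of_all _ fun t => ?_)
        dsimp only
        rw [← MeasureTheory.integral_const_mul]
        refine integral_congr_ae (ae_of_all _ fun x => ?_)
        ring
    _ = ∫ t, f t * ∫ s, φ (s - t) * g s := by
        refine integral_congr_ae (ae_of_all _ fun t => ?_)
        dsimp only
        have := integral_add_right_eq_self (μ := volume) (fun s => φ (s - t) * g s) t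
        simp only [add_sub_cancel_right] at this
        rw [← this]

theorem second_moment_of_M (f g M : ℝ → ℝ)
    (hf_meas : Measurable f)
    (hf01 : ∀ x ∈ Icc (-1:ℝ) 1, 0 ≤ f x ∧ f x ≤ 1)
    (hf_supp : ∀ x, x ∉ Icc (-1:ℝ) 1 → f x = 0)
    (hf_int : ∫ x in (-1:ℝ)..1, f x = 1)
    (hg : ∀ x, g x = if x ∈ Icc (-1:ℝ) 1 then 1 - f x else 0)
    (hM : ∀ x, M x = ∫ t in (-1:ℝ)..1, f t * g (x + t))
    (EM : ℝ) (hEM : EM = ∫ x in (-2:ℝ)..2, x * M x) :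
    ∫ x in (-2:ℝ)..2, x^2 * M x = 2/3 + (1/2) * EM^2 := by
  have f01 : ∀ x, 0 ≤ f x ∧ f x ≤ 1 := by
    intro x
    by_cases hx : x ∈ Icc (-1:ℝ) 1
    · exact hf01 x hx
    · rw [hf_supp x hx]; norm_num
  have hfb : ∀ x, |f x| ≤ 1 := fun x => abs_le.2 ⟨by linarith [(f01 x).1], (f01 x).2⟩
  have hgs : ∀ x, x ∉ Icc (-1:ℝ) 1 → g x = 0 := fun x hx => by rw [hg x]; simp [hx]
  have hgb : ∀ x, |g x| ≤ 1 := by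
    intro x
    rw [hg x]
    by_cases hx : x ∈ Icc (-1:ℝ) 1
    · simp only [hx, if_true]
      have := hf01 x hx
      rw [abs_le]; constructor <;> linarith [this.1, this.2]
    · simp [hx]
  have hgm : Measurable g := by
    have : g = fun x => if x ∈ Icc (-1:ℝ) 1 then 1 - f x else 0 := funext hg
    rw [this]
    exact Measurable.ite measurableSet_Icc (measurable_const.sub hf_meas) measurable_const
  have Ifin : (volume (Icc (-1:ℝ) 1)) ≠ ⊤ := by simp [Real.volume_Icc]
  have habs : ∀ (h : ℝ → ℝ), (∀ x, |h x| ≤ 1) → (∀ x, x ∉ Icc (-1:ℝ) 1 → h x = 0) →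
      ∀ (k : ℕ) (x : ℝ), |x ^ k * h x| ≤ 1 := by
    intro h hb hs k x
    by_cases hx : x ∈ Icc (-1:ℝ) 1
    · rw [abs_mul, abs_pow]
      have hx1 : |x| ≤ 1 := abs_le.2 ⟨hx.1, hx.2⟩
      exact mul_le_one₀ (pow_le_one₀ (abs_nonneg x) hx1) (abs_nonneg _) (hb x)
    · simp [hs x hx]
  have Int0 : ∀ (h : ℝ → ℝ), Measurable h → (∀ x, |h x| ≤ 1) →
      (∀ x, x ∉ Icc (-1:ℝ) 1 → h x = 0) → Integrable h := fun h hm hb hs =>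
    integrable_of_support (Icc (-1:ℝ) 1) measurableSet_Icc Ifin h hm.aestronglyMeasurable hs hb
  have IntP : ∀ (h : ℝ → ℝ), Measurable h → (∀ x, |h x| ≤ 1) →
      (∀ x, x ∉ Icc (-1:ℝ) 1 → h x = 0) → ∀ k : ℕ,
      Integrable (fun x => x ^ k * h x) := by
    intro h hm hb hs k
    exact Int0 _ ((measurable_id.pow_const k).mul hm)
      (habs h hb hs k) (fun x hx => by rw [hs x hx, mul_zero])
  have Int_f : Integrable f := Int0 f hf_meas hfb hf_supp
  have Int_g : Integrable g := Int0 g hgm hgb hgs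
  have Int_xf : Integrable (fun t => t * f t) := by simpa using IntP f hf_meas hfb hf_supp 1
  have Int_x2f : Integrable (fun t => t ^ 2 * f t) := IntP f hf_meas hfb hf_supp 2
  have Int_sg : Integrable (fun s => s * g s) := by simpa using IntP g hgm hgb hgs 1
  have Int_s2g : Integrable (fun s => s ^ 2 * g s) := IntP g hgm hgb hgs 2
  have i2f : ∀ (h : ℝ → ℝ), (∀ x, x ∉ Icc (-1:ℝ) 1 → h x = 0) →
      ∫ x in (-1:ℝ)..1, h x = ∫ x, h x := fun h hs =>
    interval_eq_full (by norm_num : (0:ℝ) ≤ 1) h hs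
  have i2f2 : ∀ (h : ℝ → ℝ), (∀ x, x ∉ Icc (-2:ℝ) 2 → h x = 0) →
      ∫ x in (-2:ℝ)..2, h x = ∫ x, h x := fun h hs =>
    interval_eq_full (by norm_num : (0:ℝ) ≤ 2) h hs
  set m1 := ∫ t, t * f t with hm1
  set m2 := ∫ t, t ^ 2 * f t with hm2
  have hf1 : ∫ t, f t = 1 := by rw [← i2f f hf_supp]; exact hf_int
  have guIcc : ∀ x ∈ uIcc (-1:ℝ) 1, g x = 1 - f x := by
    intro x hx
    rw [uIcc_of_le (by norm_num : (-1:ℝ) ≤ 1)] at hx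
    rw [hg x, if_pos hx]
  have intg : ∫ s, g s = 1 := by
    rw [← i2f g hgs, intervalIntegral.integral_congr guIcc,
      intervalIntegral.integral_sub (intervalIntegrable_const) Int_f.intervalIntegrable, hf_int]
    norm_num [intervalIntegral.integral_const]
  have m1g : ∫ s, s * g s = -m1 := by
    rw [← i2f (fun s => s * g s) (fun x hx => by simp [hgs x hx])]
    rw [intervalIntegral.integral_congr (g := fun x => x - x * f x)
      (fun x hx => by rw [guIcc x hx]; ring)]
    rw [intervalIntegral.integral_sub (continuous_id'.intervalIntegrable _ _)
      Int_xf.intervalIntegrable]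
    rw [i2f (fun x => x * f x) (fun x hx => by simp [hf_supp x hx]), ← hm1,
      integral_id]
    norm_num
  have m2g : ∫ s, s ^ 2 * g s = 2/3 - m2 := by
    rw [← i2f (fun s => s ^ 2 * g s) (fun x hx => by simp [hgs x hx])]
    rw [intervalIntegral.integral_congr (g := fun x => x ^ 2 - x ^ 2 * f x)
      (fun x hx => by rw [guIcc x hx]; ring)]
    rw [intervalIntegral.integral_sub ((continuous_pow 2).intervalIntegrable _ _)
      Int_x2f.intervalIntegrable]
    rw [i2f (fun x => x ^ 2 * f x) (fun x hx => by simp [hf_supp x hx]), ← hm2,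
      integral_pow]
    norm_num
  have Mfull : ∀ x, M x = ∫ t, f t * g (x + t) := fun x => by
    rw [hM x]
    exact i2f (fun t => f t * g (x + t)) (fun t ht => by simp [hf_supp t ht])
  have hM0 : ∀ x, x ∉ Icc (-2:ℝ) 2 → M x = 0 := by
    intro x hx
    rw [Mfull x]
    have hz : ∀ t, f t * g (x + t) = 0 := by
      intro t
      by_cases ht : t ∈ Icc (-1:ℝ) 1
      · rw [hgs (x + t), mul_zero]
        simp only [mem_Icc, not_and, not_le] at hx ⊢
        obtain ⟨c, d⟩ := ht
        intro h1
        by_cases h2 : -2 ≤ x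
        · linarith [hx h2]
        · push_neg at h2; linarith
      · rw [hf_supp t ht, zero_mul]
    simp [hz]
  have EM1 : EM = -(2 * m1) := by
    rw [hEM, i2f2 (fun x => x * M x) (fun x hx => by simp [hM0 x hx])]
    calc ∫ x, x * M x = ∫ x, x * ∫ t, f t * g (x + t) := by simp_rw [Mfull]
      _ = ∫ t, f t * ∫ s, (s - t) * g s :=
          fubini_step f g (fun x => x) hf_meas hgm measurable_id hfb hgb
            (fun x hx => by
              show |x| ≤ 4
              rw [abs_le]; constructor <;> linarith [hx.1, hx.2]) hf_supp hgs
      _ = ∫ t, f t * (-m1 - t) := by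
          refine integral_congr_ae (ae_of_all _ fun t => ?_)
          dsimp only
          congr 1
          have e : ∀ s, (s - t) * g s = s * g s - t * g s := fun s => by ring
          simp_rw [e]
          rw [integral_sub Int_sg (Int_g.const_mul t), MeasureTheory.integral_const_mul,
            m1g, intg]
          ring
      _ = -(2 * m1) := by
          have e : ∀ t, f t * (-m1 - t) = (-m1) * f t - t * f t := fun t => by ring
          simp_rw [e]
          rw [integral_sub (Int_f.const_mul _) Int_xf, MeasureTheory.integral_const_mul,
            hf1, ← hm1]
          ring
  rw [i2f2 (fun x => x ^ 2 * M x) (fun x hx => by simp [hM0 x hx]), EM1]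
  calc ∫ x, x ^ 2 * M x = ∫ x, x ^ 2 * ∫ t, f t * g (x + t) := by simp_rw [Mfull]
    _ = ∫ t, f t * ∫ s, (s - t) ^ 2 * g s :=
        fubini_step f g (fun x => x ^ 2) hf_meas hgm (measurable_id.pow_const 2) hfb hgb
          (fun x hx => by
            show |x ^ 2| ≤ 4
            rw [abs_le]; constructor <;> nlinarith [hx.1, hx.2])
          hf_supp hgs
    _ = ∫ t, f t * ((2/3 - m2) + 2 * m1 * t + t ^ 2) := by
        refine integral_congr_ae (ae_of_all _ fun t => ?_)
        dsimp only
        congr 1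
        have e : ∀ s, (s - t) ^ 2 * g s =
            (s ^ 2 * g s - (2 * t) * (s * g s)) + (t ^ 2) * g s := fun s => by ring
        simp_rw [e]
        have I1 : Integrable (fun s : ℝ => s ^ 2 * g s - 2 * t * (s * g s)) :=
          Int_s2g.sub (Int_sg.const_mul _)
        rw [integral_add I1 (Int_g.const_mul _),
          integral_sub Int_s2g (Int_sg.const_mul _), MeasureTheory.integral_const_mul,
          MeasureTheory.integral_const_mul, m1g, m2g, intg]
        ring
    _ = 2/3 + 1/2 * (-(2 * m1)) ^ 2 := by
        have e : ∀ t, f t * ((2/3 - m2) + 2 * m1 * t + t ^ 2) =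
            ((2/3 - m2) * f t + (2 * m1) * (t * f t)) + t ^ 2 * f t := fun t => by ring
        simp_rw [e]
        have I1 : Integrable (fun t : ℝ => (2/3 - m2) * f t + 2 * m1 * (t * f t)) :=
          (Int_f.const_mul _).add (Int_xf.const_mul _)
        rw [integral_add I1 Int_x2f,
          integral_add (Int_f.const_mul _) (Int_xf.const_mul _),
          MeasureTheory.integral_const_mul, MeasureTheory.integral_const_mul,
          hf1, ← hm1, ← hm2]
        ring
end
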